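/- arXiv:math-ph/9911041 — 9 statements merged into one kernel-verified Lean document; each statement's English description precedes it below -/
import Mathlib

section
/- Let D ⊆ ℝ be an interval, 0 < T ≤ ∞, and let f, g : [0,T) × D → ℝ be continuous functions such that f(t,w) ≤ g(t,u) whenever w ≤ u, for t ∈ (0,T) and w,u ∈ D. Assume the Cauchy problem u̇(t) = g(t,u(t)), u(0) = u₀ ∈ D, has a unique solution. If w is a differentiable function with ẇ(t) ≤ f(t,w(t)) and w(0) = w₀ ≤ u₀, w₀ ∈ D, then u(t) ≥ w(t) for all t at which both u(t) and w(t) are defined. -/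
/-!
Suppose `u t₁ < w t₁` and let `t₀` be the last time before `t₁` with `w t₀ = u t₀`. Solve
`ż = g(t, z)` backwards from `(t₁, w t₁)`: the solution can be chosen below the subsolution `w`,
so, starting above `u`, it meets `u` at a last time `s ∈ [t₀, t₁)` and stays between `u` and `w`
(hence in `D`) afterwards. Following `u` up to `s` and `z` after it gives a second solution of
the Cauchy problem for `u`, contradicting uniqueness.
-/

open Set Filter Topology MeasureTheory Function
open scoped NNReal

noncomputable def lipschitzMinorant {α : Type*} [PseudoMetricSpace α] (h : α → ℝ) (K : ℝ≥0)
    (x : α) : ℝ :=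
  ⨅ y, h y + K * dist x y

section lipschitzMinorant

variable {α : Type*} [PseudoMetricSpace α] {h : α → ℝ} {m : ℝ}

theorem bddBelow_range_add_mul_dist (hm : ∀ y, m ≤ h y) (K : ℝ≥0) (x : α) :
    BddBelow (range fun y => h y + K * dist x y) := by
  refine ⟨m, ?_⟩
  rintro _ ⟨y, rfl⟩
  exact (hm y).trans (le_add_of_nonneg_right (by positivity))

theorem le_lipschitzMinorant [Nonempty α] (hm : ∀ y, m ≤ h y) (K : ℝ≥0) (x : α) :
    m ≤ lipschitzMinorant h K x :=
  le_ciInf fun y => (hm y).trans (le_add_of_nonneg_right (by positivity))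

theorem lipschitzMinorant_le (hm : ∀ y, m ≤ h y) (K : ℝ≥0) (x : α) :
    lipschitzMinorant h K x ≤ h x := by
  simpa [lipschitzMinorant] using ciInf_le (bddBelow_range_add_mul_dist hm K x) x

theorem lipschitzMinorant_mono (hm : ∀ y, m ≤ h y) {K K' : ℝ≥0} (hK : K ≤ K') (x : α) :
    lipschitzMinorant h K x ≤ lipschitzMinorant h K' x :=
  ciInf_mono (bddBelow_range_add_mul_dist hm K x) fun y => by gcongr

theorem lipschitzWith_lipschitzMinorant (hm : ∀ y, m ≤ h y) (K : ℝ≥0) :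
    LipschitzWith K (lipschitzMinorant h K) := by
  refine LipschitzWith.of_le_add_mul K fun x x' => ?_
  have : Nonempty α := ⟨x⟩
  rw [← sub_le_iff_le_add]
  refine le_ciInf fun y => ?_
  calc lipschitzMinorant h K x - K * dist x x' ≤ h y + K * dist x y - K * dist x x' := by
        gcongr; exact ciInf_le (bddBelow_range_add_mul_dist hm K x) y
    _ ≤ h y + K * dist x' y := by
        have := dist_triangle x x' y
        have : (0 : ℝ) ≤ K := K.2
        nlinarith

theorem tendsto_lipschitzMinorant (hm : ∀ y, m ≤ h y) {ι : Type*} {l : Filter ι}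
    {K : ι → ℝ≥0} {p : ι → α} {x : α} (hh : ContinuousAt h x) (hK : Tendsto K l atTop)
    (hp : Tendsto p l (𝓝 x)) : Tendsto (fun i => lipschitzMinorant h (K i) (p i)) l (𝓝 (h x)) := by
  have : Nonempty α := ⟨x⟩
  refine tendsto_order.2 ⟨fun c hc => ?_, fun c hc => ?_⟩
  · obtain ⟨δ, hδ, hδh⟩ := Metric.continuousAt_iff.1 hh ((h x - c) / 2) (by linarith)
    filter_upwards [hp (Metric.ball_mem_nhds x (half_pos hδ)),
      hK.eventually_ge_atTop (2 * (h x - m) / δ).toNNReal] with i hpi hKi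
    refine (by linarith : c < (h x + c) / 2).trans_le (le_ciInf fun y => ?_)
    rcases lt_or_ge (dist y x) δ with hy | hy
    · have := abs_lt.1 (Real.dist_eq _ _ ▸ hδh hy)
      have : (0 : ℝ) ≤ K i * dist (p i) y := by positivity
      linarith
    · -- far from `x`, the penalty `K i * dist (p i) y` outweighs `h x - m`
      have hpy : δ / 2 ≤ dist (p i) y := by
        have := dist_triangle_left y x (p i)
        have : dist (p i) x < δ / 2 := hpi
        linarith
      have hKi' : 2 * (h x - m) / δ ≤ K i := Real.toNNReal_le_iff_le_coe.1 hKi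
      have : h x - m ≤ K i * (δ / 2) := by
        rw [div_le_iff₀ hδ] at hKi'; linarith
      have : K i * (δ / 2) ≤ K i * dist (p i) y := by gcongr
      have := hm y
      have := hm x
      linarith
  · filter_upwards [(hh.tendsto.comp hp).eventually (gt_mem_nhds hc)] with i hi
    exact (lipschitzMinorant_le hm _ _).trans_lt hi

end lipschitzMinorant

theorem exists_hasDerivWithinAt_Icc_of_lipschitzWith {E : Type*} [NormedAddCommGroup E]
    [NormedSpace ℝ E] [CompleteSpace E] {G : ℝ → E → E} {K : ℝ≥0} {C a b : ℝ} (hab : a ≤ b)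
    (hGK : ∀ t, LipschitzWith K (G t)) (hGt : ∀ x, Continuous (G · x))
    (hGC : ∀ t x, ‖G t x‖ ≤ C) (x₀ : E) :
    ∃ y : ℝ → E, y a = x₀ ∧ ∀ t ∈ Icc a b, HasDerivWithinAt y (G t (y t)) (Icc a b) t := by
  have hC : 0 ≤ C := (norm_nonneg _).trans (hGC a x₀)
  have hpl : IsPicardLindelof G (⟨a, left_mem_Icc.2 hab⟩ : Icc a b) x₀
      ⟨C * (b - a), by have := sub_nonneg.2 hab; positivity⟩ 0 ⟨C, hC⟩ K :=
    { lipschitzOnWith := fun t _ => (hGK t).lipschitzOnWith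
      continuousOn := fun x _ => (hGt x).continuousOn
      norm_le := fun t _ x _ => hGC t x
      mul_max_le := by simp [sub_nonneg.2 hab]; rfl }
  exact hpl.exists_eq_forall_mem_Icc_hasDerivWithinAt₀

theorem hasDerivWithinAt_Icc_of_tendsto {E : Type*} [NormedAddCommGroup E] [NormedSpace ℝ E]
    [CompleteSpace E] {y φ : ℕ → ℝ → E} {z ψ : ℝ → E} {a b C : ℝ}
    (hy : ∀ k, ∀ t ∈ Icc a b, HasDerivWithinAt (y k) (φ k t) (Icc a b) t)
    (hφ : ∀ k, ContinuousOn (φ k) (Icc a b)) (hφC : ∀ k, ∀ t ∈ Icc a b, ‖φ k t‖ ≤ C)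
    (hyz : ∀ t ∈ Icc a b, Tendsto (y · t) atTop (𝓝 (z t)))
    (hφψ : ∀ t ∈ Icc a b, Tendsto (φ · t) atTop (𝓝 (ψ t))) (hψ : ContinuousOn ψ (Icc a b)) :
    ∀ t ∈ Icc a b, HasDerivWithinAt z (ψ t) (Icc a b) t := by
  have hz : ∀ t ∈ Icc a b, z t = z a + ∫ s in a..t, ψ s := by
    intro t ht
    have hsub : Icc a t ⊆ Icc a b := Icc_subset_Icc_right ht.2
    have hyk : ∀ k, y k t = y k a + ∫ s in a..t, φ k s := fun k => by
      rw [intervalIntegral.integral_eq_sub_of_hasDeriv_right_of_le ht.1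
        (fun s hs => (hy k s (hsub hs)).continuousWithinAt.mono hsub)
        (fun s hs => ((hy k s (hsub (Ioo_subset_Icc_self hs))).mono hsub).mono_of_mem_nhdsWithin
          (Icc_mem_nhdsGT_of_mem ⟨hs.1.le, hs.2⟩))
        (ContinuousOn.intervalIntegrable_of_Icc ht.1 ((hφ k).mono hsub))]
      abel
    have hIoc : uIoc a t ⊆ Icc a b := by
      rw [uIoc_of_le ht.1]; exact Ioc_subset_Icc_self.trans hsub
    have hint : Tendsto (fun k => ∫ s in a..t, φ k s) atTop (𝓝 (∫ s in a..t, ψ s)) := by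
      refine intervalIntegral.tendsto_integral_filter_of_dominated_convergence (fun _ => C)
        (.of_forall fun k => ((hφ k).mono hIoc).aestronglyMeasurable measurableSet_uIoc)
        (.of_forall fun k => ae_of_all _ fun s hs => hφC k s (hIoc hs))
        intervalIntegrable_const (ae_of_all _ fun s hs => hφψ s (hIoc hs))
    have hlim : Tendsto (y · t) atTop (𝓝 (z a + ∫ s in a..t, ψ s)) := by
      simpa only [hyk] using (hyz a (left_mem_Icc.2 (ht.1.trans ht.2))).add hint
    exact tendsto_nhds_unique (hyz t ht) hlim
  intro t ht
  have : Fact (t ∈ Icc a b) := ⟨ht⟩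
  have := intervalIntegral.integral_hasDerivWithinAt_right (s := Icc a b) (t := Icc a b)
    ((hψ.mono (Icc_subset_Icc_right ht.2)).intervalIntegrable_of_Icc ht.1)
    (hψ.stronglyMeasurableAtFilter_nhdsWithin measurableSet_Icc t) (hψ t ht)
  exact (this.const_add (z a)).congr (fun s hs => hz s hs) (hz t ht)

theorem LipschitzOnWith.of_tendsto {α β ι : Type*} [PseudoMetricSpace α] [PseudoMetricSpace β]
    {l : Filter ι} [l.NeBot] {f : ι → α → β} {g : α → β} {K : ℝ≥0} {s : Set α}
    (hf : ∀ i, LipschitzOnWith K (f i) s) (hfg : ∀ x ∈ s, Tendsto (f · x) l (𝓝 (g x))) :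
    LipschitzOnWith K g s :=
  LipschitzOnWith.of_dist_le_mul fun x hx y hy =>
    le_of_tendsto_of_tendsto' ((hfg x hx).dist (hfg y hy)) tendsto_const_nhds fun i =>
      (hf i).dist_le_mul x hx y hy

theorem exists_lipschitz_approx_from_below {α : Type*} [PseudoMetricSpace α] {H : α → ℝ} {M : ℝ}
    (hH : Continuous H) (hM : ∀ p, |H p| ≤ M) :
    ∃ G : ℕ → α → ℝ, (∀ k, ∃ K, LipschitzWith K (G k)) ∧ (∀ k p, |G k p| ≤ M + 1) ∧
      (∀ k p, G k p < G (k + 1) p) ∧ (∀ k p, G k p < H p) ∧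
      ∀ p (q : ℕ → α), Tendsto q atTop (𝓝 p) → Tendsto (fun k => G k (q k)) atTop (𝓝 (H p)) := by
  have hm : ∀ p, -M ≤ H p := fun p => neg_le_of_abs_le (hM p)
  have hβ : ∀ k : ℕ, 0 < 1 / ((k : ℝ) + 1) ∧ 1 / ((k : ℝ) + 1) ≤ 1 := fun k =>
    ⟨by positivity, div_le_one_of_le₀ (by linarith [k.cast_nonneg (α := ℝ)]) (by positivity)⟩
  refine ⟨fun k p => lipschitzMinorant H k p - 1 / (k + 1),
    fun k => ⟨_, (lipschitzWith_lipschitzMinorant hm k).sub (LipschitzWith.const _)⟩,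
    fun k p => ?_, fun k p => ?_, fun k p => ?_, fun p q hq => ?_⟩
  · have : Nonempty α := ⟨p⟩
    have := le_lipschitzMinorant hm k p
    have := (lipschitzMinorant_le hm k p).trans (le_of_abs_le (hM p))
    rw [abs_le]; constructor <;> linarith [hβ k]
  · have := lipschitzMinorant_mono hm (Nat.cast_le.2 k.le_succ) p
    have : 1 / (((k + 1 : ℕ) : ℝ) + 1) < 1 / (k + 1) := by
      gcongr; linarith
    linarith
  · linarith [lipschitzMinorant_le hm k p, hβ k]
  · simpa using (tendsto_lipschitzMinorant hm hH.continuousAt tendsto_natCast_atTop_atTop hq).sub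
      tendsto_one_div_add_atTop_nhds_zero_nat

/-- `z` is the increasing limit of the Picard–Lindelöf solutions for Lipschitz fields lying
strictly below `H`; strict comparison keeps each of them below every supersolution. -/
theorem exists_solution_forall_le_supersolution {H : ℝ → ℝ → ℝ} {M a b : ℝ} (hab : a ≤ b)
    (hH : Continuous (uncurry H)) (hM : ∀ t x, |H t x| ≤ M) (x₀ : ℝ) :
    ∃ z : ℝ → ℝ, z a = x₀ ∧ (∀ t ∈ Icc a b, HasDerivWithinAt z (H t (z t)) (Icc a b) t) ∧
      ∀ v v' : ℝ → ℝ, ContinuousOn v (Icc a b) →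
        (∀ t ∈ Ico a b, HasDerivWithinAt v (v' t) (Ici t) t) →
        (∀ t ∈ Ico a b, H t (v t) ≤ v' t) → x₀ ≤ v a → ∀ t ∈ Icc a b, z t ≤ v t := by
  obtain ⟨G, hGK, hGM, hG_mono, hG_lt, hG_lim⟩ :=
    exists_lipschitz_approx_from_below hH (fun p => hM p.1 p.2)
  choose K hK using hGK
  choose y hy₀ hy using fun k => exists_hasDerivWithinAt_Icc_of_lipschitzWith
    (G := fun t x => G k (t, x)) hab (fun t => (hK k).comp (LipschitzWith.prodMk_left t))
    (fun x => (hK k).continuous.comp (Continuous.prodMk_left x)) (fun t x => hGM k (t, x)) x₀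
  have hy_cont : ∀ k, ContinuousOn (y k) (Icc a b) := fun k t ht =>
    (hy k t ht).continuousWithinAt
  have hy_right : ∀ k, ∀ t ∈ Ico a b, HasDerivWithinAt (y k) (G k (t, y k t)) (Ici t) t :=
    fun k t ht => (hy k t (Ico_subset_Icc_self ht)).mono_of_mem_nhdsWithin
      (Icc_mem_nhdsGE_of_mem ht)
  have hM₁ : 0 ≤ M + 1 := (abs_nonneg _).trans (hGM 0 (a, x₀))
  have hy_lip : ∀ k, LipschitzOnWith (M + 1).toNNReal (y k) (Icc a b) := fun k =>
    (convex_Icc a b).lipschitzOnWith_of_nnnorm_hasDerivWithin_le (hy k) fun t _ =>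
      (Real.le_toNNReal_iff_coe_le hM₁).2 (hGM k _)
  have hy_mono : ∀ k, ∀ t ∈ Icc a b, y k t ≤ y (k + 1) t := fun k =>
    image_le_of_deriv_right_lt_deriv_boundary' (hy_cont k) (hy_right k) (by rw [hy₀, hy₀])
      (hy_cont _) (hy_right _) fun t _ h => by rw [← h]; exact hG_mono k _
  have hbdd : ∀ t ∈ Icc a b, BddAbove (range (y · t)) := by
    refine fun t ht => ⟨x₀ + (M + 1).toNNReal * dist t a, ?_⟩
    rintro _ ⟨k, rfl⟩
    have := (hy_lip k).dist_le_mul t ht a (left_mem_Icc.2 hab)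
    rw [hy₀, Real.dist_eq] at this
    linarith [le_abs_self (y k t - x₀)]
  set z := fun t => ⨆ k, y k t
  have hyz : ∀ t ∈ Icc a b, Tendsto (y · t) atTop (𝓝 (z t)) := fun t ht =>
    tendsto_atTop_ciSup (monotone_nat_of_le_succ fun k => hy_mono k t ht) (hbdd t ht)
  have hz_cont : ContinuousOn z (Icc a b) := (LipschitzOnWith.of_tendsto hy_lip hyz).continuousOn
  refine ⟨z, by simp [z, hy₀], hasDerivWithinAt_Icc_of_tendsto hy
    (fun k => (hK k).continuous.comp_continuousOn (continuousOn_id.prodMk (hy_cont k)))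
    (fun k t _ => hGM k _) hyz
    (fun t ht => hG_lim (t, z t) _ (tendsto_const_nhds.prodMk_nhds (hyz t ht)))
    (hH.comp_continuousOn (continuousOn_id.prodMk hz_cont)),
    fun v v' hv hv' hvH hva t ht => ciSup_le fun k => ?_⟩
  exact image_le_of_deriv_right_lt_deriv_boundary' (hy_cont k) (hy_right k) (by rwa [hy₀]) hv hv'
    (fun s hs h => by rw [h]; exact (hG_lt k (s, v s)).trans_le (hvH s hs)) ht

theorem exists_solution_forall_le_subsolution_backward {H : ℝ → ℝ → ℝ} {M a b : ℝ}
    (hab : a ≤ b) (hH : Continuous (uncurry H)) (hM : ∀ t x, |H t x| ≤ M) (x₁ : ℝ) :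
    ∃ z : ℝ → ℝ, z b = x₁ ∧ (∀ t ∈ Icc a b, HasDerivWithinAt z (H t (z t)) (Icc a b) t) ∧
      ∀ v v' : ℝ → ℝ, ContinuousOn v (Icc a b) →
        (∀ t ∈ Ioc a b, HasDerivWithinAt v (v' t) (Iic t) t) →
        (∀ t ∈ Ioc a b, v' t ≤ H t (v t)) → x₁ ≤ v b → ∀ t ∈ Icc a b, z t ≤ v t := by
  set r : ℝ → ℝ := fun t => a + b - t
  have hr : ∀ t, HasDerivAt r (-1) t := fun t => by
    simpa using (hasDerivAt_id t).const_sub (a + b)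
  have hr_Icc : MapsTo r (Icc a b) (Icc a b) := fun t ht =>
    ⟨by linarith [ht.2], by linarith [ht.1]⟩
  obtain ⟨z, hz₀, hz, hz_le⟩ := exists_solution_forall_le_supersolution
    (H := fun t x => -H (r t) x) hab
    (hH.comp (by fun_prop : Continuous fun p : ℝ × ℝ => (r p.1, p.2))).neg
    (fun t x => (abs_neg (H (r t) x)).trans_le (hM _ _)) x₁
  refine ⟨z ∘ r, by simpa [r] using hz₀, fun t ht => ?_, fun v v' hv hv' hvH hvb t ht => ?_⟩
  · simpa [r] using (hz (r t) (hr_Icc ht)).comp t (hr t).hasDerivWithinAt hr_Icc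
  · have hr_Ioc : ∀ s ∈ Ico a b, r s ∈ Ioc a b := fun s hs =>
      ⟨by linarith [hs.2], by linarith [hs.1]⟩
    simpa [r] using hz_le (v ∘ r) (fun s => -v' (r s))
      (hv.comp (by fun_prop) hr_Icc)
      (fun s hs => by
        simpa using (hv' (r s) (hr_Ioc s hs)).comp s (hr s).hasDerivWithinAt
          fun u hu => by simp only [r, mem_Iic, mem_Ici] at hu ⊢; linarith)
      (fun s hs => neg_le_neg (hvH (r s) (hr_Ioc s hs))) (by simpa [r] using hvb)
      (r t) (hr_Icc ht)

def IsSolutionOn (g : ℝ → ℝ → ℝ) (D : Set ℝ) (u : ℝ → ℝ) (s : Set ℝ) : Prop :=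
  ∀ t ∈ s, u t ∈ D ∧ HasDerivAt u (g t (u t)) t

theorem IsSolutionOn.mono {g : ℝ → ℝ → ℝ} {D s s' : Set ℝ} {u : ℝ → ℝ}
    (hu : IsSolutionOn g D u s) (hs : s' ⊆ s) : IsSolutionOn g D u s' :=
  fun t ht => hu t (hs ht)

theorem HasDerivAt.ite_le_of_lt {u v : ℝ → ℝ} {s x d : ℝ} (hu : HasDerivAt u d x) (hx : x < s) :
    HasDerivAt (fun t => if t ≤ s then u t else v t) d x :=
  hu.congr_of_eventuallyEq ((eventually_lt_nhds hx).mono fun _ ht => if_pos ht.le)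

theorem HasDerivAt.ite_le_of_gt {u v : ℝ → ℝ} {s x d : ℝ} (hv : HasDerivAt v d x) (hx : s < x) :
    HasDerivAt (fun t => if t ≤ s then u t else v t) d x :=
  hv.congr_of_eventuallyEq ((eventually_gt_nhds hx).mono fun _ ht => if_neg ht.not_ge)

theorem hasDerivAt_ite_le_self {u v : ℝ → ℝ} {s d : ℝ} (hu : HasDerivWithinAt u d (Iic s) s)
    (hv : HasDerivWithinAt v d (Ici s) s) (hs : u s = v s) :
    HasDerivAt (fun t => if t ≤ s then u t else v t) d s := by
  have hl : HasDerivWithinAt (fun t => if t ≤ s then u t else v t) d (Iic s) s :=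
    hu.congr (fun t ht => if_pos ht) (if_pos le_rfl)
  have hr : HasDerivWithinAt (fun t => if t ≤ s then u t else v t) d (Ici s) s := by
    refine hv.congr (fun t ht => ?_) (by rw [if_pos le_rfl, hs])
    rcases (mem_Ici.1 ht).eq_or_lt with rfl | h
    · rw [if_pos le_rfl, hs]
    · exact if_neg h.not_ge
  simpa using hl.union hr

theorem IsSolutionOn.ite_le {g : ℝ → ℝ → ℝ} {D : Set ℝ} {u z : ℝ → ℝ} {a s b : ℝ}
    (hu : IsSolutionOn g D u (Icc a s))
    (hz : ∀ t ∈ Icc s b, z t ∈ D ∧ HasDerivWithinAt z (g t (z t)) (Icc s b) t) (huz : u s = z s)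
    (hsb : s < b) : IsSolutionOn g D (fun t => if t ≤ s then u t else z t) (Ico a b) := by
  intro t ht
  rcases lt_trichotomy t s with h | rfl | h
  · have hu' := hu t ⟨ht.1, h.le⟩
    simpa only [if_pos h.le] using And.intro hu'.1 (hu'.2.ite_le_of_lt h)
  · have hu' := hu t ⟨ht.1, le_rfl⟩
    have hz' := ((hz t ⟨le_rfl, hsb.le⟩).2.mono_of_mem_nhdsWithin (Icc_mem_nhdsGE hsb))
    rw [← huz] at hz'
    simpa only [if_pos le_rfl] using
      And.intro hu'.1 (hasDerivAt_ite_le_self hu'.2.hasDerivWithinAt hz' huz)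
  · have hz' := hz t ⟨h.le, ht.2.le⟩
    simpa only [if_neg h.not_ge] using
      And.intro hz'.1 ((hz'.2.hasDerivAt (Icc_mem_nhds h ht.2)).ite_le_of_gt h)

theorem exists_eq_forall_lt_of_le_of_lt {f g : ℝ → ℝ} {a b : ℝ} (hab : a ≤ b)
    (hf : ContinuousOn f (Icc a b)) (hg : ContinuousOn g (Icc a b)) (ha : f a ≤ g a)
    (hb : g b < f b) : ∃ c ∈ Ico a b, f c = g c ∧ ∀ t ∈ Ioc c b, g t < f t := by
  set S := {t ∈ Icc a b | f t ≤ g t}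
  have hSb : BddAbove S := ⟨b, fun t ht => ht.1.2⟩
  have hcS : sSup S ∈ S :=
    (isClosed_Icc.isClosed_le hf hg).csSup_mem ⟨a, left_mem_Icc.2 hab, ha⟩ hSb
  have hlt : ∀ t ∈ Ioc (sSup S) b, g t < f t := fun t ht => not_le.1 fun h =>
    ht.1.not_ge (le_csSup hSb ⟨⟨hcS.1.1.trans ht.1.le, ht.2⟩, h⟩)
  have hcb : sSup S < b := hcS.1.2.lt_of_ne fun h => hb.not_ge (h ▸ hcS.2)
  refine ⟨sSup S, ⟨hcS.1.1, hcb⟩, hcS.2.antisymm (not_lt.1 fun h => ?_), hlt⟩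
  obtain ⟨t, ht, hft⟩ : (0 : ℝ) ∈ (f - g) '' Icc (sSup S) b :=
    intermediate_value_Icc hcb.le ((hf.sub hg).mono (Icc_subset_Icc_left hcS.1.1))
      ⟨sub_nonpos.2 h.le, sub_nonneg.2 hb.le⟩
  rcases ht.1.eq_or_lt with rfl | htc
  · exact h.ne (sub_eq_zero.1 hft)
  · exact (hlt t ⟨htc, ht.2⟩).ne' (sub_eq_zero.1 hft)

theorem exists_bounded_continuous_extension_Icc_prod {g : ℝ → ℝ → ℝ} {a b k c : ℝ}
    (hab : a ≤ b) (hkc : k ≤ c) (hg : ContinuousOn (uncurry g) (Icc a b ×ˢ Icc k c)) :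
    ∃ G : ℝ → ℝ → ℝ, Continuous (uncurry G) ∧ (∃ M, ∀ t x, |G t x| ≤ M) ∧
      ∀ t ∈ Icc a b, ∀ x ∈ Icc k c, G t x = g t x := by
  obtain ⟨M, hM⟩ := (isCompact_Icc.prod isCompact_Icc).exists_bound_of_continuousOn hg
  have hmem : ∀ p : ℝ × ℝ, ((projIcc a b hab p.1 : ℝ), (projIcc k c hkc p.2 : ℝ)) ∈
      Icc a b ×ˢ Icc k c := fun p => ⟨Subtype.prop _, Subtype.prop _⟩
  refine ⟨fun t x => g (projIcc a b hab t) (projIcc k c hkc x),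
    hg.comp_continuous ?_ hmem, ⟨M, fun t x => hM _ (hmem (t, x))⟩,
    fun t ht x hx => by simp [projIcc_of_mem _ ht, projIcc_of_mem _ hx]⟩
  exact ((continuous_subtype_val.comp continuous_projIcc).comp continuous_fst).prodMk
    ((continuous_subtype_val.comp continuous_projIcc).comp continuous_snd)

theorem exists_solution_between {D : Set ℝ} (hD : D.OrdConnected) {g : ℝ → ℝ → ℝ}
    {u w w' : ℝ → ℝ} {a b : ℝ} (hab : a < b) (hg : ContinuousOn (uncurry g) (Icc a b ×ˢ D))
    (hu : ContinuousOn u (Icc a b)) (huD : MapsTo u (Icc a b) D)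
    (hw : ContinuousOn w (Icc a b)) (hwD : MapsTo w (Icc a b) D)
    (hw' : ∀ t ∈ Ioc a b, HasDerivWithinAt w (w' t) (Iic t) t ∧ w' t ≤ g t (w t))
    (hwu : w a ≤ u a) (huw : ∀ t ∈ Ioc a b, u t < w t) :
    ∃ s ∈ Ico a b, ∃ z : ℝ → ℝ, z s = u s ∧ (∀ t ∈ Ioc s b, u t < z t) ∧
      ∀ t ∈ Icc s b, z t ∈ D ∧ HasDerivWithinAt z (g t (z t)) (Icc s b) t := by
  -- between `u` and `w` only values in `Icc (min u) (max w) ⊆ D` occur; extend `g` from there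
  have hb : b ∈ Icc a b := right_mem_Icc.2 hab.le
  obtain ⟨τ₁, hτ₁, hu_min⟩ := isCompact_Icc.exists_isMinOn (nonempty_Icc.2 hab.le) hu
  obtain ⟨τ₂, hτ₂, hw_max⟩ := isCompact_Icc.exists_isMaxOn (nonempty_Icc.2 hab.le) hw
  have hkc : u τ₁ ≤ w τ₂ := (hu_min hb).trans ((huw b ⟨hab, le_rfl⟩).le.trans (hw_max hb))
  have hkcD : Icc (u τ₁) (w τ₂) ⊆ D := hD.out (huD hτ₁) (hwD hτ₂)
  obtain ⟨G, hG, ⟨M, hM⟩, hGg⟩ := exists_bounded_continuous_extension_Icc_prod hab.le hkc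
    (hg.mono (prod_mono subset_rfl hkcD))
  obtain ⟨z, hzb, hz, hz_le⟩ := exists_solution_forall_le_subsolution_backward hab.le hG hM (w b)
  have hzw : ∀ t ∈ Icc a b, z t ≤ w t := by
    refine hz_le w w' hw (fun t ht => (hw' t ht).1) (fun t ht => ?_) le_rfl
    rw [hGg t (Ioc_subset_Icc_self ht) (w t)
      ⟨(hu_min (Ioc_subset_Icc_self ht)).trans (huw t ht).le, hw_max (Ioc_subset_Icc_self ht)⟩]
    exact (hw' t ht).2
  obtain ⟨s, hs, hzu, hlt⟩ := exists_eq_forall_lt_of_le_of_lt hab.le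
    (fun t ht => (hz t ht).continuousWithinAt) hu ((hzw a (left_mem_Icc.2 hab.le)).trans hwu)
    (hzb ▸ huw b ⟨hab, le_rfl⟩)
  have hz_mem : ∀ t ∈ Icc s b, z t ∈ Icc (u τ₁) (w τ₂) := by
    intro t ht
    have htab : t ∈ Icc a b := ⟨hs.1.trans ht.1, ht.2⟩
    have huz : u t ≤ z t := by
      rcases ht.1.eq_or_lt with rfl | h
      exacts [hzu.ge, (hlt t ⟨h, ht.2⟩).le]
    exact ⟨(hu_min htab).trans huz, (hzw t htab).trans (hw_max htab)⟩
  refine ⟨s, hs, z, hzu, hlt, fun t ht => ⟨hkcD (hz_mem t ht), ?_⟩⟩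
  rw [← hGg t ⟨hs.1.trans ht.1, ht.2⟩ (z t) (hz_mem t ht)]
  exact (hz t ⟨hs.1.trans ht.1, ht.2⟩).mono (Icc_subset_Icc_left hs.1)

theorem le_of_subsolution_of_unique {D : Set ℝ} (hD : D.OrdConnected) {g : ℝ → ℝ → ℝ}
    {u w w' : ℝ → ℝ} {a b : ℝ} (hab : a ≤ b) (hg : ContinuousOn (uncurry g) (Icc a b ×ˢ D))
    (hu : IsSolutionOn g D u (Icc a b))
    (hu_uniq : ∀ v, v a = u a → IsSolutionOn g D v (Ico a b) → EqOn v u (Ico a b))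
    (hw : ∀ t ∈ Icc a b, w t ∈ D ∧ HasDerivAt w (w' t) t)
    (hw' : ∀ t ∈ Ioc a b, w' t ≤ g t (w t)) (hwu : w a ≤ u a) : w b ≤ u b := by
  by_contra! hlt
  have hu_cont : ContinuousOn u (Icc a b) := fun t ht =>
    (hu t ht).2.continuousAt.continuousWithinAt
  have hw_cont : ContinuousOn w (Icc a b) := fun t ht =>
    (hw t ht).2.continuousAt.continuousWithinAt
  obtain ⟨t₀, ht₀, hwu₀, huw⟩ := exists_eq_forall_lt_of_le_of_lt hab hw_cont hu_cont hwu hlt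
  have hsub : Icc t₀ b ⊆ Icc a b := Icc_subset_Icc_left ht₀.1
  obtain ⟨s, hs, z, hzu, hlt_s, hz⟩ := exists_solution_between hD ht₀.2
    (hg.mono (prod_mono hsub subset_rfl)) (hu_cont.mono hsub) (fun t ht => (hu t (hsub ht)).1)
    (hw_cont.mono hsub) (fun t ht => (hw t (hsub ht)).1)
    (fun t ht => ⟨(hw t (hsub (Ioc_subset_Icc_self ht))).2.hasDerivWithinAt,
      hw' t ⟨ht₀.1.trans_lt ht.1, ht.2⟩⟩) hwu₀.le huw
  have hglue := (hu.mono (Icc_subset_Icc_right hs.2.le)).ite_le hz hzu.symm hs.2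
  have hm : (s + b) / 2 ∈ Ioo s b := ⟨by linarith [hs.2], by linarith [hs.2]⟩
  have := hu_uniq (fun t => if t ≤ s then u t else z t) (if_pos (ht₀.1.trans hs.1)) hglue
    ⟨by linarith [ht₀.1, hs.1], hm.2⟩
  simp only [if_neg hm.1.not_ge] at this
  exact (hlt_s _ ⟨hm.1, hm.2.le⟩).ne' this

theorem comparison_lemma_general
    (D : Set ℝ) (hD : D.OrdConnected) (T : EReal)
    (f g : ℝ → ℝ → ℝ)
    (hg : ContinuousOn (fun p : ℝ × ℝ => g p.1 p.2)
      ({t : ℝ | 0 ≤ t ∧ (t : EReal) < T} ×ˢ D))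
    (hfg : ∀ t w u : ℝ, 0 < t → (t : EReal) < T → w ∈ D → u ∈ D → w ≤ u → f t w ≤ g t u)
    (u0 w0 : ℝ) (hw0u0 : w0 ≤ u0)
    (Tu Tw : ℝ) (hTu : (Tu : EReal) ≤ T)
    (u : ℝ → ℝ) (hu_init : u 0 = u0)
    (hu_sol : ∀ t ∈ Ico (0 : ℝ) Tu, u t ∈ D ∧ HasDerivAt u (g t (u t)) t)
    (hu_uniq : ∀ (u' : ℝ → ℝ) (T' : ℝ), T' ≤ Tu → u' 0 = u0 →
      (∀ t ∈ Ico (0 : ℝ) T', u' t ∈ D ∧ HasDerivAt u' (g t (u' t)) t) →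
      ∀ t ∈ Ico (0 : ℝ) T', u' t = u t)
    (w : ℝ → ℝ) (w' : ℝ → ℝ) (hw_init : w 0 = w0)
    (hw_sol : ∀ t ∈ Ico (0 : ℝ) Tw,
      w t ∈ D ∧ HasDerivAt w (w' t) t ∧ w' t ≤ f t (w t)) :
    ∀ t ∈ Ico (0 : ℝ) (min Tu Tw), w t ≤ u t := by
  rintro t₁ ⟨ht₁, ht₁T⟩
  have htu : t₁ < Tu := ht₁T.trans_le (min_le_left _ _)
  have htw : ∀ t ∈ Icc 0 t₁, t ∈ Ico 0 Tw := fun t ht =>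
    ⟨ht.1, ht.2.trans_lt (ht₁T.trans_le (min_le_right _ _))⟩
  have hT : ∀ t ≤ t₁, (t : EReal) < T := fun t ht =>
    (EReal.coe_lt_coe_iff.2 (ht.trans_lt htu)).trans_le hTu
  refine le_of_subsolution_of_unique hD ht₁
    (hg.mono (prod_mono (fun t ht => ⟨ht.1, hT t ht.2⟩) subset_rfl))
    (fun t ht => hu_sol t ⟨ht.1, ht.2.trans_lt htu⟩)
    (fun v hv hv_sol => hu_uniq v t₁ htu.le (hv.trans hu_init) hv_sol)
    (fun t ht => ⟨(hw_sol t (htw t ht)).1, (hw_sol t (htw t ht)).2.1⟩) (fun t ht => ?_)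
    (by rw [hw_init, hu_init]; exact hw0u0)
  obtain ⟨hwD, -, hw'f⟩ := hw_sol t (htw t (Ioc_subset_Icc_self ht))
  exact hw'f.trans (hfg t (w t) (w t) ht.1 (hT t ht.2) hwD hwD le_rfl)

/-- **Comparison lemma for scalar differential inequalities.**
Let `D ⊆ ℝ` be an interval, `0 < T ≤ ∞`, and `f, g : [0,T) × D → ℝ` continuous with
`f t w ≤ g t u` whenever `w ≤ u` (for `t ∈ (0,T)`, `w, u ∈ D`).  Assume the Cauchy problem
`u̇ = g(t,u)`, `u 0 = u₀ ∈ D` has a unique solution `u` (defined on `[0, Tu)`).  If `w` is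
differentiable with `ẇ(t) ≤ f(t, w t)` on `[0, Tw)` and `w 0 = w₀ ≤ u₀`, `w₀ ∈ D`, then
`w t ≤ u t` for all `t` at which both solutions are defined. -/
theorem comparison_lemma
    (D : Set ℝ) (hD : D.OrdConnected) (T : EReal) (hT : 0 < T)
    (f g : ℝ → ℝ → ℝ)
    (hf : ContinuousOn (fun p : ℝ × ℝ => f p.1 p.2)
      ({t : ℝ | 0 ≤ t ∧ (t : EReal) < T} ×ˢ D))
    (hg : ContinuousOn (fun p : ℝ × ℝ => g p.1 p.2)
      ({t : ℝ | 0 ≤ t ∧ (t : EReal) < T} ×ˢ D))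
    (hfg : ∀ t w u : ℝ, 0 < t → (t : EReal) < T → w ∈ D → u ∈ D → w ≤ u → f t w ≤ g t u)
    (u0 w0 : ℝ) (hu0 : u0 ∈ D) (hw0 : w0 ∈ D) (hw0u0 : w0 ≤ u0)
    (Tu Tw : ℝ) (hTu : (Tu : EReal) ≤ T) (hTw : (Tw : EReal) ≤ T)
    (u : ℝ → ℝ) (hu_init : u 0 = u0)
    (hu_sol : ∀ t ∈ Ico (0 : ℝ) Tu, u t ∈ D ∧ HasDerivAt u (g t (u t)) t)
    (hu_uniq : ∀ (u' : ℝ → ℝ) (T' : ℝ), T' ≤ Tu → u' 0 = u0 →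
      (∀ t ∈ Ico (0 : ℝ) T', u' t ∈ D ∧ HasDerivAt u' (g t (u' t)) t) →
      ∀ t ∈ Ico (0 : ℝ) T', u' t = u t)
    (w : ℝ → ℝ) (w' : ℝ → ℝ) (hw_init : w 0 = w0)
    (hw_sol : ∀ t ∈ Ico (0 : ℝ) Tw,
      w t ∈ D ∧ HasDerivAt w (w' t) t ∧ w' t ≤ f t (w t)) :
    ∀ t ∈ Ico (0 : ℝ) (min Tu Tw), w t ≤ u t :=
  comparison_lemma_general D hD T f g hg hfg u0 w0 hw0u0 Tu Tw hTu u hu_init hu_sol hu_uniq w w'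
    hw_init hw_sol
end

section
/- Let H be a real Hilbert space and F : H → H be monotone and hemicontinuous. Then for every ε > 0 and every z₀ ∈ H the regularized equation F(x) + ε(x − z₀) = 0 has a unique solution x ∈ H. -/
/-!
Put `G x = ε⁻¹ • F x + (x - z₀)`. Its zeros are the solutions, and
`‖x - y‖² ≤ ⟪G x - G y, x - y⟫`, which gives uniqueness at once. For existence, the sets
`C x = {c | ‖x - c‖² ≤ ⟪G x, x - c⟫}` are closed balls. Finitely many of them, `C xᵢ`, meet:
if `l` maximises the concave function `l ↦ ∑ lᵢ aᵢ - ‖∑ lᵢ • bᵢ‖²` over the standard simplex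
(`bᵢ = xᵢ - G xᵢ / 2`, `aᵢ = ‖xᵢ‖² - ⟪G xᵢ, xᵢ⟫`), the first-order conditions at `l` say that
`∑ lᵢ • bᵢ` is a common point, because the maximum is `≤ 0` by a Chebyshev-type inequality for
monotone pairs. Closed balls of a Hilbert space are weakly compact, so all the `C x` share a
point `c`, and Minty's trick (test with `x = c + t • h`, let `t → 0⁺` using hemicontinuity)
gives `G c = 0`.
-/

open Set Filter Topology
open scoped RealInnerProductSpace

section

variable {H : Type*} [NormedAddCommGroup H] [InnerProductSpace ℝ H]

theorem norm_sub_half_smul_sq (y v : H) :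
    ‖y - (1 / 2 : ℝ) • v‖ ^ 2 = ‖y‖ ^ 2 - ⟪v, y⟫ + ‖v‖ ^ 2 / 4 := by
  rw [norm_sub_sq_real, real_inner_smul_right, norm_smul, real_inner_comm, mul_pow,
    Real.norm_eq_abs, sq_abs]
  ring

theorem norm_sq_le_inner_iff (y v : H) :
    ‖y‖ ^ 2 ≤ ⟪v, y⟫ ↔ ‖y - (1 / 2 : ℝ) • v‖ ≤ ‖v‖ / 2 := by
  rw [← sq_le_sq₀ (norm_nonneg _) (by positivity), norm_sub_half_smul_sq, div_pow]
  constructor <;> intro <;> linarith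

open Finset in
theorem inner_sum_smul_sum_smul_le {ι : Type*} [Fintype ι] (l : ι → ℝ) (hl : ∀ i, 0 ≤ l i)
    (φ s : ι → H) (h : ∀ i j, 0 ≤ ⟪φ i - φ j, s i - s j⟫) :
    ⟪∑ i, l i • φ i, ∑ i, l i • s i⟫ ≤ (∑ i, l i) * ∑ i, l i * ⟪φ i, s i⟫ := by
  have hswap (f : ι → ι → ℝ) : ∑ i, ∑ j, l i * l j * f j i = ∑ i, ∑ j, l i * l j * f i j := by
    rw [sum_comm]
    exact sum_congr rfl fun i _ => sum_congr rfl fun j _ => by ring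
  have hcross : ⟪∑ i, l i • φ i, ∑ i, l i • s i⟫ = ∑ i, ∑ j, l i * l j * ⟪φ i, s j⟫ := by
    simp only [sum_inner, inner_sum, real_inner_smul_left, real_inner_smul_right, ← mul_assoc]
    exact hswap fun i j => ⟪φ i, s j⟫
  have hdiag : (∑ i, l i) * ∑ i, l i * ⟪φ i, s i⟫ = ∑ i, ∑ j, l i * l j * ⟪φ j, s j⟫ := by
    simp only [sum_mul_sum, mul_assoc]
  have hterm (i j : ι) : l i * l j * ⟪φ i - φ j, s i - s j⟫ = l i * l j * ⟪φ i, s i⟫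
      - l i * l j * ⟪φ i, s j⟫ - l i * l j * ⟪φ j, s i⟫ + l i * l j * ⟪φ j, s j⟫ := by
    simp only [inner_sub_left, inner_sub_right]
    ring
  have hpos : 0 ≤ ∑ i, ∑ j, l i * l j * ⟪φ i - φ j, s i - s j⟫ :=
    sum_nonneg fun i _ => sum_nonneg fun j _ => mul_nonneg (mul_nonneg (hl i) (hl j)) (h i j)
  simp only [hterm, sum_add_distrib, sum_sub_distrib] at hpos
  linarith [hswap fun i j => ⟪φ j, s j⟫, hswap fun i j => ⟪φ i, s j⟫]

theorem exists_forall_add_norm_sq_le_two_inner {ι : Type*} [Fintype ι] (a : ι → ℝ) (b : ι → H)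
    (h : ∀ l ∈ stdSimplex ℝ ι, ∑ i, l i * a i ≤ ‖∑ i, l i • b i‖ ^ 2) :
    ∃ c : H, ∀ i, a i + ‖c‖ ^ 2 ≤ 2 * ⟪c, b i⟫ := by
  classical
  cases isEmpty_or_nonempty ι
  · exact ⟨0, isEmptyElim⟩
  let A := Fintype.linearCombination ℝ a
  let B := Fintype.linearCombination ℝ b
  obtain ⟨l, hl, hmax⟩ := (isCompact_stdSimplex ℝ ι).exists_isMaxOn
    ⟨_, single_mem_stdSimplex ℝ (Classical.arbitrary ι)⟩
    (f := fun l => A l - ‖B l‖ ^ 2) (by fun_prop)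
  refine ⟨B l, fun k => ?_⟩
  set c := B l
  have hdir (u : ℝ) (hu : u ∈ Ioo 0 1) :
      a k - A l - 2 * ⟪c, b k - c⟫ ≤ u * ‖b k - c‖ ^ 2 := by
    have hmem := (convex_stdSimplex ℝ ι).add_smul_sub_mem hl (single_mem_stdSimplex ℝ k)
      (Ioo_subset_Icc_self hu)
    have hle : A (l + u • (Pi.single k 1 - l)) - ‖B (l + u • (Pi.single k 1 - l))‖ ^ 2 ≤
        A l - ‖c‖ ^ 2 := hmax hmem
    rw [map_add, map_add, map_smul, map_smul, map_sub, map_sub,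
      Fintype.linearCombination_apply_single, Fintype.linearCombination_apply_single, one_smul,
      one_smul, smul_eq_mul, norm_add_sq_real, norm_smul, real_inner_smul_right, mul_pow,
      Real.norm_eq_abs, sq_abs] at hle
    refine le_of_mul_le_mul_left ?_ hu.1
    linarith
  have hg : a k - A l - 2 * ⟪c, b k - c⟫ ≤ 0 := by
    have hlim : Tendsto (fun u : ℝ => u * ‖b k - c‖ ^ 2) (𝓝[>] 0) (𝓝 0) :=
      ((continuous_id.mul continuous_const).tendsto' (0 : ℝ) 0 (by simp)).mono_left
        nhdsWithin_le_nhds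
    exact ge_of_tendsto hlim (by filter_upwards [Ioo_mem_nhdsGT one_pos] using hdir)
  have hl' : A l ≤ ‖c‖ ^ 2 := h l hl
  rw [inner_sub_right, real_inner_self_eq_norm_sq] at hg
  linarith

theorem exists_forall_norm_sub_sq_le_inner_of_finite {ι : Type*} [Fintype ι] (x t : ι → H)
    (hxt : ∀ i j, ‖x i - x j‖ ^ 2 ≤ ⟪t i - t j, x i - x j⟫) :
    ∃ c, ∀ i, ‖x i - c‖ ^ 2 ≤ ⟪t i, x i - c⟫ := by
  obtain ⟨c, hc⟩ := exists_forall_add_norm_sq_le_two_inner (fun i => ‖x i‖ ^ 2 - ⟪t i, x i⟫)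
    (fun i => x i - (1 / 2 : ℝ) • t i) fun l ⟨hl0, hl1⟩ => by
      have hcheb := inner_sum_smul_sum_smul_le l hl0 (fun i => t i - x i) x fun i j => by
        rw [sub_sub_sub_comm, inner_sub_left, real_inner_self_eq_norm_sq]
        linarith [hxt i j]
      have hmid : ∑ i, l i • (x i - (1 / 2 : ℝ) • t i) =
          ∑ i, l i • x i - (1 / 2 : ℝ) • ∑ i, l i • t i := by
        simp only [smul_sub, Finset.sum_sub_distrib, Finset.smul_sum, smul_comm (l _)]
      simp only [smul_sub, Finset.sum_sub_distrib, hl1, one_mul, inner_sub_left, mul_sub,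
        real_inner_self_eq_norm_sq] at hcheb
      rw [hmid, norm_sub_half_smul_sq]
      simp only [mul_sub, Finset.sum_sub_distrib]
      linarith [sq_nonneg ‖∑ i, l i • t i‖]
  refine ⟨c, fun i => ?_⟩
  have := hc i
  simp only [inner_sub_right, real_inner_smul_right, norm_sub_sq_real, real_inner_comm] at this ⊢
  linarith

theorem inclusionInDoubleDual_surjective [CompleteSpace H] :
    Function.Surjective (NormedSpace.inclusionInDoubleDual ℝ H) := by
  intro φ
  let e := InnerProductSpace.toDual ℝ H
  refine ⟨e.symm (φ.comp e.toContinuousLinearEquiv.toContinuousLinearMap), ?_⟩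
  ext f
  obtain ⟨y, rfl⟩ := e.surjective f
  rw [NormedSpace.dual_def, InnerProductSpace.toDual_apply_apply, real_inner_comm,
    InnerProductSpace.toDual_symm_apply]
  rfl

theorem isCompact_toWeakSpace_image [CompleteSpace H] {B : Set H} (hbdd : Bornology.IsBounded B)
    (hclosed : IsClosed B) (hconv : Convex ℝ B) : IsCompact (toWeakSpace ℝ H '' B) := by
  have hcl : closure (toWeakSpace ℝ H '' B) = toWeakSpace ℝ H '' B := by
    rw [← hconv.toWeakSpace_closure ℝ, hclosed.closure_eq]
  rw [← hcl]
  refine NormedSpace.isCompact_closure_of_isBounded ℝ H _ ?_ ?_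
  · simpa [preimage_image_eq _ (toWeakSpace ℝ H).injective] using hbdd
  · intro y _
    obtain ⟨x, hx⟩ := inclusionInDoubleDual_surjective (StrongDual.toWeakDual.symm y)
    refine ⟨toWeakSpace ℝ H x, ContinuousLinearMap.ext fun f => ?_⟩
    rw [NormedSpace.inclusionInDoubleDualWeak_apply_apply, LinearEquiv.symm_apply_apply]
    exact DFunLike.congr_fun hx f

theorem isClosed_toWeakSpace_image {C : Set H} (hclosed : IsClosed C) (hconv : Convex ℝ C) :
    IsClosed (toWeakSpace ℝ H '' C) := by
  rw [← closure_eq_iff_isClosed, ← hconv.toWeakSpace_closure ℝ, hclosed.closure_eq]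

theorem nonempty_iInter_of_isClosed_of_convex [CompleteSpace H] {ι : Type*} (C : ι → Set H)
    (hclosed : ∀ i, IsClosed (C i)) (hconv : ∀ i, Convex ℝ (C i)) (i₀ : ι)
    (hbdd : Bornology.IsBounded (C i₀)) (hfin : ∀ s : Finset ι, (⋂ i ∈ s, C i).Nonempty) :
    (⋂ i, C i).Nonempty := by
  classical
  let e := toWeakSpace ℝ H
  have hcompact := isCompact_toWeakSpace_image hbdd (hclosed i₀) (hconv i₀)
  obtain ⟨y, -, hy⟩ := hcompact.inter_iInter_nonempty (fun i => e '' C i)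
    (fun i => isClosed_toWeakSpace_image (hclosed i) (hconv i)) fun s => by
      obtain ⟨x, hx⟩ := hfin (insert i₀ s)
      simp only [mem_iInter, Finset.mem_insert] at hx
      exact ⟨e x, mem_image_of_mem e (hx i₀ (Or.inl rfl)),
        mem_iInter₂.2 fun i hi => mem_image_of_mem e (hx i (Or.inr hi))⟩
  refine ⟨e.symm y, mem_iInter.2 fun i => ?_⟩
  obtain ⟨x, hx, rfl⟩ := mem_iInter.1 hy i
  simpa using hx

theorem exists_forall_norm_sub_sq_le_inner [CompleteSpace H] (G : H → H)
    (hG : ∀ x y, ‖x - y‖ ^ 2 ≤ ⟪G x - G y, x - y⟫) :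
    ∃ c, ∀ x, ‖x - c‖ ^ 2 ≤ ⟪G x, x - c⟫ := by
  let C (x : H) : Set H := {c | ‖x - c‖ ^ 2 ≤ ⟪G x, x - c⟫}
  have hball (x : H) : C x = Metric.closedBall (x - (1 / 2 : ℝ) • G x) (‖G x‖ / 2) := by
    ext c
    rw [mem_ofPred_eq, norm_sq_le_inner_iff, Metric.mem_closedBall, dist_comm, dist_eq_norm,
      sub_right_comm]
  obtain ⟨c, hc⟩ := nonempty_iInter_of_isClosed_of_convex C
    (fun x => hball x ▸ Metric.isClosed_closedBall) (fun x => hball x ▸ convex_closedBall _ _) 0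
    (hball 0 ▸ Metric.isBounded_closedBall) fun s => by
      obtain ⟨c, hc⟩ := exists_forall_norm_sub_sq_le_inner_of_finite (fun x : s => (x : H))
        (fun x => G x) fun x y => hG x y
      exact ⟨c, mem_iInter₂.2 fun x hx => hc ⟨x, hx⟩⟩
  exact ⟨c, mem_iInter.1 hc⟩

theorem eq_zero_of_forall_inner_sub_nonneg {G : H → H} {c : H}
    (hG : ∀ h : H, ContinuousWithinAt (fun t : ℝ => ⟪G (c + t • h), h⟫) (Ioi 0) 0)
    (hc : ∀ x, 0 ≤ ⟪G x, x - c⟫) : G c = 0 := by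
  have hdir : ∀ h, 0 ≤ ⟪G c, h⟫ := fun h => by
    have hpos : ∀ t ∈ Ioi (0 : ℝ), 0 ≤ ⟪G (c + t • h), h⟫ := fun t ht => by
      have := hc (c + t • h)
      rw [add_sub_cancel_left, real_inner_smul_right] at this
      exact nonneg_of_mul_nonneg_right this ht
    simpa using ge_of_tendsto (hG h) (eventually_nhdsWithin_of_forall hpos)
  have := hdir (-G c)
  rwa [inner_neg_right, neg_nonneg, real_inner_self_nonpos] at this

theorem existsUnique_zero_of_norm_sub_sq_le_inner [CompleteSpace H] (G : H → H)
    (hG : ∀ x y, ‖x - y‖ ^ 2 ≤ ⟪G x - G y, x - y⟫)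
    (hhemi : ∀ c h : H, ContinuousWithinAt (fun t : ℝ => ⟪G (c + t • h), h⟫) (Ioi 0) 0) :
    ∃! c, G c = 0 := by
  obtain ⟨c, hc⟩ := exists_forall_norm_sub_sq_le_inner G hG
  have hc0 : G c = 0 :=
    eq_zero_of_forall_inner_sub_nonneg (hhemi c) fun x => (sq_nonneg _).trans (hc x)
  refine ⟨c, hc0, fun y hy => ?_⟩
  simpa [hy, hc0, sub_eq_zero] using hG y c

end

/-- **Unique solvability of the regularized equation for monotone hemicontinuous maps.**
Let `H` be a real Hilbert space and `F : H → H` monotone and hemicontinuous.  Then for every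
`ε > 0` and every `z₀ ∈ H` the regularized equation `F x + ε (x − z₀) = 0` has a unique
solution `x ∈ H`. -/
theorem regularized_equation_unique_solvability
    {H : Type*} [NormedAddCommGroup H] [InnerProductSpace ℝ H] [CompleteSpace H]
    (F : H → H)
    (hmono : ∀ x₁ x₂ : H, 0 ≤ ⟪F x₁ - F x₂, x₁ - x₂⟫)
    (hhemi : ∀ x₀ h₁ h₂ : H, ∃ δ > (0 : ℝ),
      ContinuousOn (fun t : ℝ => ⟪F (x₀ + t • h₁), h₂⟫) (Ioo (-δ) δ)) :
    ∀ ε : ℝ, 0 < ε → ∀ z₀ : H, ∃! x : H, F x + ε • (x - z₀) = 0 := by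
  intro ε hε z₀
  let G : H → H := fun x => ε⁻¹ • F x + (x - z₀)
  have hG_zero (x : H) : G x = ε⁻¹ • (F x + ε • (x - z₀)) := by
    simp only [G, smul_add, smul_smul, inv_mul_cancel₀ hε.ne', one_smul]
  have hG_mono (x y : H) : ‖x - y‖ ^ 2 ≤ ⟪G x - G y, x - y⟫ := by
    have hsub : G x - G y = ε⁻¹ • (F x - F y) + (x - y) := by
      simp only [G, smul_sub]
      abel
    rw [hsub, inner_add_left, real_inner_smul_left, real_inner_self_eq_norm_sq]
    linarith [mul_nonneg (inv_nonneg.2 hε.le) (hmono x y)]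
  have hG_hemi (c h : H) :
      ContinuousWithinAt (fun t : ℝ => ⟪G (c + t • h), h⟫) (Ioi 0) 0 := by
    obtain ⟨δ, hδ, hcont⟩ := hhemi c h h
    have hF : ContinuousAt (fun t : ℝ => ⟪F (c + t • h), h⟫) 0 :=
      hcont.continuousAt (Ioo_mem_nhds (neg_neg_of_pos hδ) hδ)
    simp only [G, inner_add_left, real_inner_smul_left]
    exact ((hF.const_mul _).add (by fun_prop)).continuousWithinAt
  simpa only [hG_zero, smul_eq_zero, inv_eq_zero, hε.ne', false_or] using
    existsUnique_zero_of_norm_sub_sq_le_inner G hG_mono hG_hemi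
end

section
/- Let H be a real Hilbert space, F : H → H be monotone, hemicontinuous and w-continuous, and suppose the equation F(z) = 0 has a unique solution y ∈ H. Let ε : [0,∞) → (0,∞) with ε(t) → 0 as t → +∞, and for each t let x(t) be the unique solution of the regularized equation F(x) + ε(t)(x − z₀) = 0. Then ‖x(t) − y‖ → 0 as t → +∞. -/
open Set Filter
open scoped RealInnerProductSpace

lemma exists_weak_subseq {H : Type*} [NormedAddCommGroup H] [InnerProductSpace ℝ H]
    [CompleteSpace H] (u : ℕ → H) (C : ℝ) (hC : ∀ n, ‖u n‖ ≤ C) :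
    ∃ (ξ : H) (φ : ℕ → ℕ), StrictMono φ ∧
      ∀ h : H, Tendsto (fun n => ⟪u (φ n), h⟫) atTop (nhds ⟪ξ, h⟫) := by
  have hC0 : 0 ≤ C := le_trans (norm_nonneg _) (hC 0)
  set K : Submodule ℝ H := (Submodule.span ℝ (Set.range u)).topologicalClosure with hKdef
  haveI : CompleteSpace K :=
    (Submodule.isClosed_topologicalClosure _).completeSpace_coe
  have huK : ∀ n, u n ∈ K := fun n =>
    Submodule.le_topologicalClosure _ (Submodule.subset_span ⟨n, rfl⟩)
  -- separability
  have hsep : TopologicalSpace.IsSeparable (K : Set H) := by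
    have h1 : TopologicalSpace.IsSeparable (Set.range u) :=
      (Set.countable_range u).isSeparable
    have h2 := h1.span (R := ℝ)
    have h3 := h2.closure
    rwa [Submodule.topologicalClosure_coe]
  obtain ⟨D, Dcnt, hD⟩ := hsep
  obtain ⟨d, hd⟩ := (Dcnt.insert (0 : H)).exists_eq_range (insert_nonempty _ _)
  have hKd : (K : Set H) ⊆ closure (Set.range d) := by
    rw [← hd]
    exact hD.trans (closure_mono (subset_insert _ _))
  -- diagonal extraction via sequential compactness of a product of intervals
  have hbound : ∀ n k, (fun k => ⟪u n, d k⟫) k ∈ Icc (-(C * ‖d k‖)) (C * ‖d k‖) := by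
    intro n k
    have h1 : |⟪u n, d k⟫| ≤ ‖u n‖ * ‖d k‖ := abs_real_inner_le_norm _ _
    have h2 : ‖u n‖ * ‖d k‖ ≤ C * ‖d k‖ :=
      mul_le_mul_of_nonneg_right (hC n) (norm_nonneg _)
    exact abs_le.mp (h1.trans h2)
  obtain ⟨g, -, φ, hφ, hconv⟩ :=
    (isCompact_univ_pi fun k => isCompact_Icc).isSeqCompact
      (x := fun n => fun k => ⟪u n, d k⟫) (fun n => mem_univ_pi.mpr (hbound n))
  have hk : ∀ k, Tendsto (fun n => ⟪u (φ n), d k⟫) atTop (nhds (g k)) := by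
    intro k
    exact (tendsto_pi_nhds.mp hconv) k
  -- Cauchy for each h
  have key : ∀ h : H, CauchySeq fun n => ⟪u (φ n), h⟫ := by
    intro h
    have hinner : ∀ n, ⟪u n, h⟫ = ⟪u n, (K.orthogonalProjection h : H)⟫ := by
      intro n
      have horth : h - K.orthogonalProjection h ∈ Kᗮ :=
        Submodule.sub_starProjection_mem_orthogonal (K := K) h
      have hz : ⟪u n, h - K.orthogonalProjection h⟫ = 0 :=
        (Submodule.mem_orthogonal K _).mp horth (u n) (huK n)
      have := inner_sub_right (𝕜 := ℝ) (u n) h (K.orthogonalProjection h : H)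
      linarith [this, hz]
    set P : H := (K.orthogonalProjection h : H) with hP
    have hPK : P ∈ (K : Set H) := (K.orthogonalProjection h).2
    simp only [hinner]
    rw [Metric.cauchySeq_iff]
    intro ε hε
    have hεd : 0 < ε / (4 * (C + 1)) := by positivity
    obtain ⟨b, ⟨k, rfl⟩, hb⟩ := Metric.mem_closure_iff.mp (hKd hPK) _ hεd
    have hcau := (hk k).cauchySeq
    rw [Metric.cauchySeq_iff] at hcau
    obtain ⟨N, hN⟩ := hcau (ε / 2) (by positivity)
    refine ⟨N, fun m hm n hn => ?_⟩
    have est : ∀ a b : ℕ, |⟪u (φ a) - u (φ b), P - d k⟫| ≤ 2 * C * (ε / (4 * (C + 1))) := by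
      intro a b
      have h1 : |⟪u (φ a) - u (φ b), P - d k⟫| ≤ ‖u (φ a) - u (φ b)‖ * ‖P - d k‖ :=
        abs_real_inner_le_norm _ _
      have h2 : ‖u (φ a) - u (φ b)‖ ≤ 2 * C := by
        calc ‖u (φ a) - u (φ b)‖ ≤ ‖u (φ a)‖ + ‖u (φ b)‖ := norm_sub_le _ _
        _ ≤ 2 * C := by linarith [hC (φ a), hC (φ b)]
      have h3 : ‖P - d k‖ ≤ ε / (4 * (C + 1)) := by
        rw [← dist_eq_norm]
        exact le_of_lt hb
      calc |⟪u (φ a) - u (φ b), P - d k⟫| ≤ ‖u (φ a) - u (φ b)‖ * ‖P - d k‖ := h1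
      _ ≤ (2 * C) * (ε / (4 * (C + 1))) := by
          apply mul_le_mul h2 h3 (norm_nonneg _) (by positivity)
      _ = 2 * C * (ε / (4 * (C + 1))) := by ring
    have hdk := hN m hm n hn
    rw [Real.dist_eq] at hdk ⊢
    have e1 : ⟪u (φ m), P⟫ - ⟪u (φ n), P⟫ = ⟪u (φ m) - u (φ n), P⟫ :=
      (inner_sub_left _ _ _).symm
    have e2 : ⟪u (φ m), d k⟫ - ⟪u (φ n), d k⟫ = ⟪u (φ m) - u (φ n), d k⟫ :=
      (inner_sub_left _ _ _).symm
    have e3 : ⟪u (φ m) - u (φ n), P⟫ =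
        ⟪u (φ m) - u (φ n), d k⟫ + ⟪u (φ m) - u (φ n), P - d k⟫ := by
      rw [inner_sub_right]; ring
    have hfrac : 2 * C * (ε / (4 * (C + 1))) < ε / 2 := by
      have h4 : 2 * C / (4 * (C + 1)) < 1 / 2 := by
        rw [div_lt_div_iff₀ (by positivity) (by norm_num)]
        linarith
      calc 2 * C * (ε / (4 * (C + 1))) = 2 * C / (4 * (C + 1)) * ε := by ring
      _ < 1 / 2 * ε := mul_lt_mul_of_pos_right h4 hε
      _ = ε / 2 := by ring
    calc |⟪u (φ m), P⟫ - ⟪u (φ n), P⟫| = |⟪u (φ m) - u (φ n), P⟫| := by rw [e1]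
    _ ≤ |⟪u (φ m) - u (φ n), d k⟫| + |⟪u (φ m) - u (φ n), P - d k⟫| := by
        rw [e3]; exact abs_add_le _ _
    _ < ε / 2 + ε / 2 := by
        have := est m n
        have h5 : |⟪u (φ m) - u (φ n), d k⟫| < ε / 2 := by rw [← e2]; exact hdk
        linarith
    _ = ε := by ring
  have hlim : ∀ h : H, ∃ a : ℝ, Tendsto (fun n => ⟪u (φ n), h⟫) atTop (nhds a) :=
    fun h => cauchySeq_tendsto_of_complete (key h)
  choose L hL using hlim
  -- L is linear and bounded
  have Ladd : ∀ h₁ h₂ : H, L (h₁ + h₂) = L h₁ + L h₂ := by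
    intro h₁ h₂
    refine tendsto_nhds_unique (hL (h₁ + h₂)) ?_
    have := (hL h₁).add (hL h₂)
    simpa [inner_add_right] using this
  have Lsmul : ∀ (c : ℝ) (h : H), L (c • h) = c * L h := by
    intro c h
    refine tendsto_nhds_unique (hL (c • h)) ?_
    have := (hL h).const_mul c
    simpa [real_inner_smul_right] using this
  have Lbound : ∀ h : H, ‖L h‖ ≤ C * ‖h‖ := by
    intro h
    have h1 : Tendsto (fun n => |⟪u (φ n), h⟫|) atTop (nhds |L h|) := (hL h).abs
    have h2 : ∀ n, |⟪u (φ n), h⟫| ≤ C * ‖h‖ := fun n =>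
      (abs_real_inner_le_norm _ _).trans (mul_le_mul_of_nonneg_right (hC (φ n)) (norm_nonneg _))
    have := le_of_tendsto h1 (Eventually.of_forall h2)
    simpa [Real.norm_eq_abs] using this
  let f : H →L[ℝ] ℝ := LinearMap.mkContinuous
    { toFun := L, map_add' := Ladd, map_smul' := Lsmul } C Lbound
  refine ⟨(InnerProductSpace.toDual ℝ H).symm f, φ, hφ, fun h => ?_⟩
  rw [InnerProductSpace.toDual_symm_apply]
  exact hL h

/-- **Convergence of the solutions of the regularized equations to the exact solution.**
Let `H` be a real Hilbert space, `F : H → H` monotone, hemicontinuous and `w`-continuous, and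
suppose `F z = 0` has a unique solution `y`.  Let `ε : [0,∞) → (0,∞)` with `ε t → 0` as
`t → ∞`, and for each `t` let `x t` be the (unique) solution of
`F x + ε t (x − z₀) = 0`.  Then `‖x t − y‖ → 0` as `t → ∞`. -/

theorem regularized_solutions_converge
    {H : Type*} [NormedAddCommGroup H] [InnerProductSpace ℝ H] [CompleteSpace H]
    (F : H → H)
    (hmono : ∀ x₁ x₂ : H, 0 ≤ ⟪F x₁ - F x₂, x₁ - x₂⟫)
    (hhemi : ∀ x₀ h₁ h₂ : H, ∃ δ > (0 : ℝ),
      ContinuousOn (fun t : ℝ => ⟪F (x₀ + t • h₁), h₂⟫) (Ioo (-δ) δ))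
    (hwcont : ∀ (xs : ℕ → H) (ξ : H),
      (∀ h : H, Tendsto (fun n => ⟪xs n, h⟫) atTop (nhds ⟪ξ, h⟫)) →
      ∀ h : H, Tendsto (fun n => ⟪F (xs n), h⟫) atTop (nhds ⟪F ξ, h⟫))
    (y : H) (hy : F y = 0) (hy_uniq : ∀ y' : H, F y' = 0 → y' = y)
    (z₀ : H) (ε : ℝ → ℝ)
    (hεpos : ∀ t ∈ Ici (0 : ℝ), 0 < ε t)
    (hεlim : Tendsto ε atTop (nhds 0))
    (x : ℝ → H)
    (hx : ∀ t ∈ Ici (0 : ℝ), F (x t) + ε t • (x t - z₀) = 0) :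
    Tendsto (fun t : ℝ => ‖x t - y‖) atTop (nhds 0) := by
  have hFx : ∀ t ∈ Ici (0 : ℝ), F (x t) = -ε t • (x t - z₀) := by
    intro t ht
    have h := eq_neg_of_add_eq_zero_left (hx t ht)
    rw [h, neg_smul]
  have hkey : ∀ t ∈ Ici (0 : ℝ), ‖x t - y‖ ^ 2 ≤ ⟪z₀ - y, x t - y⟫ := by
    intro t ht
    have h1 : 0 ≤ ⟪F (x t) - F y, x t - y⟫ := hmono _ _
    rw [hy, sub_zero, hFx t ht] at h1
    rw [real_inner_smul_left] at h1
    have h3 : ⟪x t - z₀, x t - y⟫ ≤ 0 := by nlinarith [hεpos t ht]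
    have h4 : x t - z₀ = (x t - y) + (y - z₀) := by abel
    rw [h4, inner_add_left] at h3
    have h5 : ⟪x t - y, x t - y⟫ = ‖x t - y‖ ^ 2 := real_inner_self_eq_norm_sq _
    have h6 : ⟪y - z₀, x t - y⟫ = -⟪z₀ - y, x t - y⟫ := by
      rw [← neg_sub z₀ y, inner_neg_left]
    linarith
  have hbndy : ∀ t ∈ Ici (0 : ℝ), ‖x t - y‖ ≤ ‖z₀ - y‖ := by
    intro t ht
    have h1 := hkey t ht
    have h2 : ⟪z₀ - y, x t - y⟫ ≤ ‖z₀ - y‖ * ‖x t - y‖ := real_inner_le_norm _ _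
    nlinarith [norm_nonneg (x t - y), norm_nonneg (z₀ - y)]
  set M : ℝ := ‖z₀ - y‖ + ‖y‖ with hM
  have core : ∀ s : ℕ → ℝ, (∀ n, 0 ≤ s n) → Tendsto s atTop atTop →
      ∃ φ : ℕ → ℕ, StrictMono φ ∧
        Tendsto (fun n => ‖x (s (φ n)) - y‖) atTop (nhds 0) := by
    intro s hs0 hstop
    set u : ℕ → H := fun n => x (s n) with hu
    have hub : ∀ n, ‖u n‖ ≤ M := by
      intro n
      calc ‖u n‖ = ‖(x (s n) - y) + y‖ := by rw [sub_add_cancel]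
      _ ≤ ‖x (s n) - y‖ + ‖y‖ := norm_add_le _ _
      _ ≤ M := by
          have := hbndy (s n) (mem_Ici.mpr (hs0 n))
          rw [hM]; linarith
    obtain ⟨ξ, φ, hφ, hweak⟩ := exists_weak_subseq u M hub
    have hεs : Tendsto (fun n => ε (s (φ n))) atTop (nhds 0) :=
      hεlim.comp (hstop.comp hφ.tendsto_atTop)
    have hFweak := hwcont (fun n => u (φ n)) ξ hweak
    have hFzero : ∀ h : H, ⟪F ξ, h⟫ = (0 : ℝ) := by
      intro h
      have h1 : Tendsto (fun n => ⟪F (u (φ n)), h⟫) atTop (nhds 0) := by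
        apply squeeze_zero_norm (a := fun n => ε (s (φ n)) * ((M + ‖z₀‖) * ‖h‖))
        · intro n
          have heq : ⟪F (u (φ n)), h⟫ = -ε (s (φ n)) * ⟪u (φ n) - z₀, h⟫ := by
            rw [show F (u (φ n)) = -ε (s (φ n)) • (u (φ n) - z₀) from
              hFx _ (mem_Ici.mpr (hs0 (φ n))), real_inner_smul_left]
          have hεn := hεpos _ (mem_Ici.mpr (hs0 (φ n)))
          have hb1 : |⟪u (φ n) - z₀, h⟫| ≤ (M + ‖z₀‖) * ‖h‖ := by
            have := abs_real_inner_le_norm (u (φ n) - z₀) h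
            have h2 : ‖u (φ n) - z₀‖ ≤ M + ‖z₀‖ := by
              calc ‖u (φ n) - z₀‖ ≤ ‖u (φ n)‖ + ‖z₀‖ := norm_sub_le _ _
              _ ≤ M + ‖z₀‖ := by linarith [hub (φ n)]
            calc |⟪u (φ n) - z₀, h⟫| ≤ ‖u (φ n) - z₀‖ * ‖h‖ := this
            _ ≤ (M + ‖z₀‖) * ‖h‖ := mul_le_mul_of_nonneg_right h2 (norm_nonneg _)
          rw [Real.norm_eq_abs, heq, abs_mul, abs_neg, abs_of_pos hεn]
          exact mul_le_mul_of_nonneg_left hb1 hεn.le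
        · simpa using hεs.mul_const ((M + ‖z₀‖) * ‖h‖)
      exact tendsto_nhds_unique (hFweak h) h1
    have hξy : ξ = y := hy_uniq ξ (inner_self_eq_zero.mp (hFzero (F ξ)))
    have hsq : Tendsto (fun n => ⟪z₀ - y, u (φ n) - y⟫) atTop (nhds 0) := by
      have h1 := (hweak (z₀ - y)).sub_const ⟪y, z₀ - y⟫
      rw [hξy, sub_self] at h1
      refine h1.congr fun n => ?_
      rw [← inner_sub_left, real_inner_comm]
    have hn2 : Tendsto (fun n => ‖u (φ n) - y‖ ^ 2) atTop (nhds 0) :=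
      squeeze_zero (fun n => sq_nonneg _)
        (fun n => hkey (s (φ n)) (mem_Ici.mpr (hs0 (φ n)))) hsq
    refine ⟨φ, hφ, ?_⟩
    have h2 : Tendsto (fun n => Real.sqrt (‖u (φ n) - y‖ ^ 2)) atTop
        (nhds (Real.sqrt 0)) := (Real.continuous_sqrt.tendsto _).comp hn2
    rw [Real.sqrt_zero] at h2
    refine h2.congr fun n => ?_
    rw [Real.sqrt_sq (norm_nonneg _)]
  by_contra hcon
  rw [Metric.tendsto_nhds] at hcon
  push_neg at hcon
  obtain ⟨ε₀, hε₀, hfreq⟩ := hcon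
  simp only [← not_lt] at hfreq
  have hfreq' : ∀ a : ℝ, ∃ b ≥ a, ¬dist ‖x b - y‖ 0 < ε₀ := frequently_atTop.mp hfreq
  have hpick : ∀ n : ℕ, ∃ b : ℝ, (n : ℝ) ≤ b ∧ 0 ≤ b ∧ ε₀ ≤ ‖x b - y‖ := by
    intro n
    obtain ⟨b, hb1, hb2⟩ := hfreq' (max (n : ℝ) 0)
    refine ⟨b, le_trans (le_max_left _ _) hb1, le_trans (le_max_right _ _) hb1, ?_⟩
    rw [Real.dist_eq, sub_zero, abs_of_nonneg (norm_nonneg _)] at hb2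
    exact not_lt.mp hb2
  choose s hs1 hs2 hs3 using hpick
  have hstop : Tendsto s atTop atTop :=
    tendsto_atTop_mono hs1 tendsto_natCast_atTop_atTop
  obtain ⟨φ, hφ, hlim⟩ := core s hs2 hstop
  have hge : ε₀ ≤ 0 := ge_of_tendsto hlim (Eventually.of_forall fun n => hs3 (φ n))
  linarith
end

section
/- Let H be a real Hilbert space, F : H → H be continuously Fréchet differentiable with sup_{x∈H} ‖F′(x)‖ ≤ N₁ and (F′(h)ξ, ξ) ≥ 0 for all h, ξ ∈ H, and suppose F(y) = 0 for some y ∈ H. Let ε : [0,∞) → (0,∞) be continuously differentiable, z₀ ∈ H, and for each t let x(t) denote the unique solution of F(x) + ε(t)(x − z₀) = 0. Then t ↦ x(t) is continuously differentiable in the strong sense and ‖ẋ(t)‖ ≤ (|ε̇(t)|/ε(t))·‖y − z₀‖ for all t ∈ [0,∞). -/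
open Set Filter Asymptotics Topology
open scoped RealInnerProductSpace Ring

/-!
Monotonicity of `F` (from `F' ≥ 0`) gives `‖x t - z₀‖ ≤ ‖y - z₀‖` and
`ε t ‖x s - x t‖ ≤ |ε s - ε t| ‖y - z₀‖`, so `x` inherits the local Lipschitz behaviour of `ε`.
The operator `A t = F' (x t) + ε t • 1` satisfies `⟪A t ξ, ξ⟫ ≥ ε t ‖ξ‖²`, so by Lax–Milgram it is
invertible with `‖(A t)⁻¹‖ ≤ 1 / ε t`. Applying `A t` to the first-order error of `x` at `t` leaves
only `o(s - t)` remainders, whence `ẋ t = -ε̇ t • (A t)⁻¹ (x t - z₀)`; this is continuous since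
inversion is continuous on units, and it obeys the stated bound.
-/

section

variable {H : Type*} [NormedAddCommGroup H] [InnerProductSpace ℝ H]

theorem inner_sub_sub_nonneg_of_hasFDerivAt {F : H → H} {F' : H → H →L[ℝ] H}
    (hF' : ∀ a, HasFDerivAt F (F' a) a) (hpos : ∀ h ξ, 0 ≤ ⟪F' h ξ, ξ⟫) (a b : H) :
    0 ≤ ⟪F a - F b, a - b⟫ := by
  set g : ℝ → ℝ := fun r => ⟪F (b + r • (a - b)), a - b⟫
  have hg : ∀ r, HasDerivAt g ⟪F' (b + r • (a - b)) (a - b), a - b⟫ r := fun r =>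
    have hline : HasDerivAt (fun r : ℝ => b + r • (a - b)) (a - b) r := by
      simpa using ((hasDerivAt_id r).smul_const (a - b)).const_add b
    by simpa using ((hF' _).comp_hasDerivAt r hline).inner ℝ (hasDerivAt_const r (a - b))
  have hmono : Monotone g :=
    monotone_of_deriv_nonneg (fun r => (hg r).differentiableAt) fun r => (hg r).deriv ▸ hpos _ _
  have h01 : g 0 ≤ g 1 := hmono zero_le_one
  simpa [g, inner_sub_left] using h01

section Accretive

variable (T : H →L[ℝ] H) {c : ℝ}

theorem mul_norm_sq_le_inner_add_smul_one_apply (hT : ∀ ξ, 0 ≤ ⟪T ξ, ξ⟫) (ξ : H) :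
    c * ‖ξ‖ * ‖ξ‖ ≤ ⟪(T + c • 1) ξ, ξ⟫ := by
  simp only [add_apply, smul_apply, one_apply_eq_self, inner_add_left, real_inner_smul_left,
    real_inner_self_eq_norm_mul_norm]
  linarith [hT ξ]

theorem mul_norm_le_norm_add_smul_one_apply (hT : ∀ ξ, 0 ≤ ⟪T ξ, ξ⟫) (ξ : H) :
    c * ‖ξ‖ ≤ ‖(T + c • 1) ξ‖ := by
  rcases (norm_nonneg ξ).eq_or_lt with hξ | hξ
  · simp [← hξ]
  · refine le_of_mul_le_mul_right ?_ hξ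
    exact (mul_norm_sq_le_inner_add_smul_one_apply T hT ξ).trans (real_inner_le_norm _ _)

theorem isUnit_add_smul_one [CompleteSpace H] (hT : ∀ ξ, 0 ≤ ⟪T ξ, ξ⟫) (hc : 0 < c) :
    IsUnit (T + c • 1) := by
  have hB : IsCoercive ((innerSL ℝ).comp (T + c • 1)) :=
    ⟨c, hc, mul_norm_sq_le_inner_add_smul_one_apply T hT⟩
  refine ⟨hB.continuousLinearEquivOfBilin.toUnit, ContinuousLinearMap.ext fun v => ?_⟩
  exact ext_inner_right ℝ fun w => hB.continuousLinearEquivOfBilin_apply v w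

end Accretive

section MonotoneOperator

variable {F : H → H} {z₀ : H}

theorem norm_sub_le_of_regularized (hmono : ∀ a b, 0 ≤ ⟪F a - F b, a - b⟫) {x y : H} {ε : ℝ}
    (hε : 0 < ε) (hx : F x + ε • (x - z₀) = 0) (hy : F y = 0) : ‖x - z₀‖ ≤ ‖y - z₀‖ := by
  have hFx : F x = -(ε • (x - z₀)) := eq_neg_of_add_eq_zero_left hx
  have hmono_xy := hmono x y
  rw [hFx, hy, sub_zero, inner_neg_left, real_inner_smul_left] at hmono_xy
  have hangle : ⟪x - z₀, x - y⟫ ≤ 0 := by nlinarith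
  have hsplit : x - y = (x - z₀) - (y - z₀) := by abel
  rw [hsplit, inner_sub_right, real_inner_self_eq_norm_mul_norm] at hangle
  nlinarith [real_inner_le_norm (x - z₀) (y - z₀), norm_nonneg (x - z₀), norm_nonneg (y - z₀)]

theorem mul_norm_sub_le_of_regularized (hmono : ∀ a b, 0 ≤ ⟪F a - F b, a - b⟫) {x₁ x₂ : H}
    {ε₁ ε₂ : ℝ} (hx₁ : F x₁ + ε₁ • (x₁ - z₀) = 0) (hx₂ : F x₂ + ε₂ • (x₂ - z₀) = 0) :
    ε₁ * ‖x₂ - x₁‖ ≤ |ε₂ - ε₁| * ‖x₂ - z₀‖ := by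
  have hdiff : F x₂ - F x₁ = -(ε₁ • (x₂ - x₁)) - (ε₂ - ε₁) • (x₂ - z₀) := by
    rw [eq_neg_of_add_eq_zero_left hx₁, eq_neg_of_add_eq_zero_left hx₂]; module
  have hmono₂₁ := hmono x₂ x₁
  rw [hdiff, inner_sub_left, inner_neg_left, real_inner_smul_left, real_inner_smul_left,
    real_inner_self_eq_norm_mul_norm] at hmono₂₁
  have hcs : -((ε₂ - ε₁) * ⟪x₂ - z₀, x₂ - x₁⟫) ≤ |ε₂ - ε₁| * (‖x₂ - z₀‖ * ‖x₂ - x₁‖) := by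
    refine (neg_le_abs _).trans ?_
    rw [abs_mul]
    gcongr
    exact abs_real_inner_le_norm _ _
  rcases (norm_nonneg (x₂ - x₁)).eq_or_lt with h0 | h0
  · rw [← h0, mul_zero]
    positivity
  · refine le_of_mul_le_mul_right ?_ h0
    nlinarith

end MonotoneOperator

section Inverse

variable [CompleteSpace H] (T : H →L[ℝ] H) {c : ℝ}

theorem add_smul_one_apply_ringInverse_apply (hT : ∀ ξ, 0 ≤ ⟪T ξ, ξ⟫) (hc : 0 < c) (v : H) :
    (T + c • 1) ((T + c • 1)⁻¹ʳ v) = v :=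
  DFunLike.congr_fun (Ring.mul_inverse_cancel _ (isUnit_add_smul_one T hT hc)) v

theorem norm_ringInverse_add_smul_one_apply_le (hT : ∀ ξ, 0 ≤ ⟪T ξ, ξ⟫) (hc : 0 < c) (v : H) :
    ‖(T + c • 1)⁻¹ʳ v‖ ≤ ‖v‖ / c := by
  rw [le_div_iff₀' hc]
  simpa only [add_smul_one_apply_ringInverse_apply T hT hc] using
    mul_norm_le_norm_add_smul_one_apply T (c := c) hT ((T + c • 1)⁻¹ʳ v)

end Inverse

theorem ContinuousOn.ringInverse_add_smul_one_apply [CompleteSpace H] {α : Type*}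
    [TopologicalSpace α] {s : Set α} {T : α → H →L[ℝ] H} {c : α → ℝ} {v : α → H}
    (hT : ContinuousOn T s) (hc : ContinuousOn c s) (hv : ContinuousOn v s)
    (hTpos : ∀ a ∈ s, ∀ ξ, 0 ≤ ⟪T a ξ, ξ⟫) (hcpos : ∀ a ∈ s, 0 < c a) :
    ContinuousOn (fun a => (T a + c a • 1)⁻¹ʳ (v a)) s := by
  intro a ha
  obtain ⟨u, hu⟩ := isUnit_add_smul_one (T a) (hTpos a ha) (hcpos a ha)
  have hinv : ContinuousAt Ring.inverse (T a + c a • 1) := by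
    rw [← hu]
    exact NormedRing.inverse_continuousAt u
  have hA : ContinuousWithinAt (fun a => T a + c a • (1 : H →L[ℝ] H)) s a :=
    (hT a ha).add ((hc a ha).smul continuousWithinAt_const)
  exact (hinv.comp_continuousWithinAt (f := fun a => T a + c a • 1) hA).clm_apply (hv a ha)

section Trajectory

variable {F : H → H} {ε : ℝ → ℝ} {x : ℝ → H} {s : Set ℝ} {t : ℝ} {y z₀ : H}

theorem isBigO_trajectory_sub (hmono : ∀ a b, 0 ≤ ⟪F a - F b, a - b⟫) (hy : F y = 0)
    (hx : ∀ r ∈ s, F (x r) + ε r • (x r - z₀) = 0) (hεpos : ∀ r ∈ s, 0 < ε r) (ht : t ∈ s) :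
    (fun r => x r - x t) =O[𝓝[s] t] (fun r => ε r - ε t) := by
  refine IsBigO.of_bound (‖y - z₀‖ / ε t) ?_
  filter_upwards [self_mem_nhdsWithin] with r hr
  rw [Real.norm_eq_abs, div_mul_eq_mul_div, le_div_iff₀' (hεpos t ht)]
  calc ε t * ‖x r - x t‖ ≤ |ε r - ε t| * ‖x r - z₀‖ :=
        mul_norm_sub_le_of_regularized hmono (hx t ht) (hx r hr)
    _ ≤ |ε r - ε t| * ‖y - z₀‖ := by
        gcongr
        exact norm_sub_le_of_regularized hmono (hεpos r hr) (hx r hr) hy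
    _ = ‖y - z₀‖ * |ε r - ε t| := mul_comm _ _

theorem continuousWithinAt_trajectory (hmono : ∀ a b, 0 ≤ ⟪F a - F b, a - b⟫) (hy : F y = 0)
    (hx : ∀ r ∈ s, F (x r) + ε r • (x r - z₀) = 0) (hεpos : ∀ r ∈ s, 0 < ε r) (ht : t ∈ s)
    (hε : ContinuousWithinAt ε s t) : ContinuousWithinAt x s t :=
  tendsto_sub_nhds_zero_iff.mp <| (isBigO_trajectory_sub hmono hy hx hεpos ht).trans_tendsto <|
    tendsto_sub_nhds_zero_iff.mpr hε

theorem hasDerivWithinAt_trajectory [CompleteSpace H] {F' : H → H →L[ℝ] H}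
    (hF' : ∀ a, HasFDerivAt F (F' a) a) (hpos : ∀ h ξ, 0 ≤ ⟪F' h ξ, ξ⟫) (hy : F y = 0)
    (hx : ∀ r ∈ s, F (x r) + ε r • (x r - z₀) = 0) (hεpos : ∀ r ∈ s, 0 < ε r) {ε' : ℝ}
    (hε : HasDerivWithinAt ε ε' s t) (ht : t ∈ s) :
    HasDerivWithinAt x (-ε' • (F' (x t) + ε t • 1)⁻¹ʳ (x t - z₀)) s t := by
  set A := F' (x t) + ε t • 1
  set w := A⁻¹ʳ (x t - z₀)
  have hmono := inner_sub_sub_nonneg_of_hasFDerivAt hF' hpos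
  have hAw : A w = x t - z₀ := add_smul_one_apply_ringInverse_apply _ (hpos _) (hεpos t ht) _
  have hεO : (fun r => ε r - ε t) =O[𝓝[s] t] (fun r => r - t) := hε.hasFDerivWithinAt.isBigO_sub
  have hxO : (fun r => x r - x t) =O[𝓝[s] t] (fun r => r - t) :=
    (isBigO_trajectory_sub hmono hy hx hεpos ht).trans hεO
  have hxc : Tendsto x (𝓝[s] t) (𝓝 (x t)) :=
    continuousWithinAt_trajectory hmono hy hx hεpos ht hε.continuousWithinAt
  have hF_rem : (fun r => F (x r) - F (x t) - F' (x t) (x r - x t)) =o[𝓝[s] t] (· - t) :=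
    ((hF' (x t)).isLittleO.comp_tendsto hxc).trans_isBigO hxO
  have hε_cross : (fun r => (ε r - ε t) • (x r - x t)) =o[𝓝[s] t] (· - t) := by
    simpa using hεO.smul_isLittleO ((isLittleO_one_iff ℝ).mpr (tendsto_sub_nhds_zero_iff.mpr hxc))
  have hε_rem : (fun r => (ε r - ε t - (r - t) * ε') • (x t - z₀)) =o[𝓝[s] t] (· - t) := by
    simpa using (hasDerivWithinAt_iff_isLittleO.mp hε).smul_isBigO
      (isBigO_const_one ℝ (x t - z₀) (𝓝[s] t))
  have hA_rem : (fun r => A (x r - x t - (r - t) • (-ε' • w))) =o[𝓝[s] t] (· - t) := by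
    refine ((hF_rem.neg_left.sub hε_cross).sub hε_rem).congr' ?_ EventuallyEq.rfl
    filter_upwards [self_mem_nhdsWithin] with r hr
    rw [map_sub _ (x r - x t), map_smul, map_smul, hAw]
    simp only [A, add_apply, smul_apply, one_apply_eq_self, map_sub]
    rw [eq_neg_of_add_eq_zero_left (hx r hr), eq_neg_of_add_eq_zero_left (hx t ht)]
    module
  rw [hasDerivWithinAt_iff_isLittleO]
  refine IsBigO.trans_isLittleO (isBigO_of_le' _ (c := (ε t)⁻¹) fun r => ?_) hA_rem
  rw [inv_mul_eq_div, le_div_iff₀' (hεpos t ht)]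
  exact mul_norm_le_norm_add_smul_one_apply _ (hpos _) _

end Trajectory

end

theorem regularized_trajectory_derivative_bound_general
    {H : Type*} [NormedAddCommGroup H] [InnerProductSpace ℝ H] [CompleteSpace H]
    (F : H → H) (F' : H → H →L[ℝ] H)
    (hF' : ∀ x : H, HasFDerivAt F (F' x) x)
    (hF'cont : Continuous F')
    (hpos : ∀ h ξ : H, 0 ≤ ⟪F' h ξ, ξ⟫)
    (y : H) (hy : F y = 0)
    (ε : ℝ → ℝ) (ε' : ℝ → ℝ)
    (hεpos : ∀ t ∈ Ici (0 : ℝ), 0 < ε t)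
    (hεd : ∀ t ∈ Ici (0 : ℝ), HasDerivWithinAt ε (ε' t) (Ici 0) t)
    (hε'c : ContinuousOn ε' (Ici 0))
    (z₀ : H) (x : ℝ → H)
    (hx : ∀ t ∈ Ici (0 : ℝ), F (x t) + ε t • (x t - z₀) = 0) :
    ∃ x' : ℝ → H,
      (∀ t ∈ Ici (0 : ℝ), HasDerivWithinAt x (x' t) (Ici 0) t) ∧
      ContinuousOn x' (Ici 0) ∧
      ∀ t ∈ Ici (0 : ℝ), ‖x' t‖ ≤ |ε' t| / ε t * ‖y - z₀‖ := by
  have hmono := inner_sub_sub_nonneg_of_hasFDerivAt hF' hpos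
  have hεc : ContinuousOn ε (Ici 0) := fun t ht => (hεd t ht).continuousWithinAt
  have hxc : ContinuousOn x (Ici 0) := fun t ht =>
    continuousWithinAt_trajectory hmono hy hx hεpos ht (hεc t ht)
  refine ⟨fun t => -ε' t • (F' (x t) + ε t • 1)⁻¹ʳ (x t - z₀),
    fun t ht => hasDerivWithinAt_trajectory hF' hpos hy hx hεpos (hεd t ht) ht,
    hε'c.neg.smul ((hF'cont.comp_continuousOn hxc).ringInverse_add_smul_one_apply hεc
      (hxc.sub continuousOn_const) (fun r _ => hpos (x r)) hεpos), fun t ht => ?_⟩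
  calc ‖-ε' t • (F' (x t) + ε t • 1)⁻¹ʳ (x t - z₀)‖
      ≤ |ε' t| * (‖x t - z₀‖ / ε t) := by
        rw [norm_smul, norm_neg, Real.norm_eq_abs]
        gcongr
        exact norm_ringInverse_add_smul_one_apply_le _ (hpos _) (hεpos t ht) _
    _ ≤ |ε' t| * (‖y - z₀‖ / ε t) := by
        gcongr
        · exact (hεpos t ht).le
        · exact norm_sub_le_of_regularized hmono (hεpos t ht) (hx t ht) hy
    _ = |ε' t| / ε t * ‖y - z₀‖ := by ring

/-- **Differentiability of the trajectory of regularized solutions.**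
Let `H` be a real Hilbert space, `F : H → H` continuously Fréchet differentiable with
`‖F′(x)‖ ≤ N₁` and `⟪F′(h) ξ, ξ⟫ ≥ 0` for all `h, ξ`, and suppose `F y = 0`.  Let
`ε : [0,∞) → (0,∞)` be continuously differentiable, `z₀ ∈ H`, and for each `t` let `x t`
denote the (unique) solution of `F x + ε t (x − z₀) = 0`.  Then `t ↦ x t` is continuously
differentiable in the strong sense and `‖ẋ t‖ ≤ (|ε̇ t| / ε t) ‖y − z₀‖` for all `t ≥ 0`. -/
theorem regularized_trajectory_derivative_bound
    {H : Type*} [NormedAddCommGroup H] [InnerProductSpace ℝ H] [CompleteSpace H]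
    (F : H → H) (F' : H → H →L[ℝ] H) (N₁ : ℝ)
    (hF' : ∀ x : H, HasFDerivAt F (F' x) x)
    (hF'cont : Continuous F')
    (hN₁ : ∀ x : H, ‖F' x‖ ≤ N₁)
    (hpos : ∀ h ξ : H, 0 ≤ ⟪F' h ξ, ξ⟫)
    (y : H) (hy : F y = 0)
    (ε : ℝ → ℝ) (ε' : ℝ → ℝ)
    (hεpos : ∀ t ∈ Ici (0 : ℝ), 0 < ε t)
    (hεd : ∀ t ∈ Ici (0 : ℝ), HasDerivWithinAt ε (ε' t) (Ici 0) t)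
    (hε'c : ContinuousOn ε' (Ici 0))
    (z₀ : H) (x : ℝ → H)
    (hx : ∀ t ∈ Ici (0 : ℝ), F (x t) + ε t • (x t - z₀) = 0) :
    ∃ x' : ℝ → H,
      (∀ t ∈ Ici (0 : ℝ), HasDerivWithinAt x (x' t) (Ici 0) t) ∧
      ContinuousOn x' (Ici 0) ∧
      ∀ t ∈ Ici (0 : ℝ), ‖x' t‖ ≤ |ε' t| / ε t * ‖y - z₀‖ :=
  regularized_trajectory_derivative_bound_general F F' hF' hF'cont hpos y hy ε ε' hεpos hεd hε'c z₀
    x hx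
end

section
/- Let H be a real Hilbert space and F : H → H be twice Fréchet differentiable with (F′(h)ξ, ξ) ≥ 0 for all h, ξ ∈ H and ‖F′(x)‖ ≤ N₁, ‖F″(x)‖ ≤ N₂ for all x ∈ H. Let ε : [0,∞) → (0,∞), z₀ ∈ H, and for each t let x(t) denote the unique solution of F(x) + ε(t)(x − z₀) = 0. Define Φ(h,t) := −[F′(h) + ε(t)I]^{-1}[F(h) + ε(t)(h − z₀)]. Then for all h ∈ H and t ≥ 0: (Φ(h,t), h − x(t)) ≤ −‖h − x(t)‖² + (N₂/(2ε(t)))·‖h − x(t)‖³. -/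
/-!
Write `v = h - x t` and `A = F' h + ε t • 1`. Monotonicity of `F` makes `A` coercive with
constant `ε t`, so by Lax–Milgram the Newton step `w = A⁻¹ (F h + ε t (h - z₀))` is defined.
Since `x t` solves the regularized equation, `A v - A w` is exactly the second-order Taylor
remainder of `F` at `h`, of norm at most `N₂ / 2 * ‖v‖ ^ 2`; coercivity turns this into
`‖v - w‖ ≤ N₂ / (2 ε t) * ‖v‖ ^ 2`, and `⟪-w, v⟫ = -‖v‖ ^ 2 + ⟪v - w, v⟫`.
-/

open Set
open scoped RealInnerProductSpace

section Taylor

variable {E G : Type*} [NormedAddCommGroup E] [NormedSpace ℝ E]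
  [NormedAddCommGroup G] [NormedSpace ℝ G]

theorem norm_image_sub_sub_fderiv_le_of_lipschitz (F : E → G) (F' : E → E →L[ℝ] G) (L : ℝ)
    (hF' : ∀ y, HasFDerivAt F (F' y) y) (a b : E)
    (hL : ∀ y, ‖F' y - F' a‖ ≤ L * ‖y - a‖) :
    ‖F b - F a - F' a (b - a)‖ ≤ L / 2 * ‖b - a‖ ^ 2 := by
  set v := b - a
  let f : ℝ → G := fun s => F (a + s • v) - F a - s • F' a v
  have hf : ∀ s, HasDerivAt f (F' (a + s • v) v - F' a v) s := by
    intro s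
    have hline : HasDerivAt (fun s : ℝ => a + s • v) v s := by
      simpa using ((hasDerivAt_id s).smul_const v).const_add a
    have hscal : HasDerivAt (fun s : ℝ => s • F' a v) (F' a v) s := by
      simpa using (hasDerivAt_id' s).smul_const (F' a v)
    exact (((hF' _).comp_hasDerivAt s hline).sub_const (F a)).sub hscal
  have hB : ∀ s, HasDerivAt (fun s => L * ‖v‖ ^ 2 * (s ^ 2 / 2)) (L * ‖v‖ ^ 2 * s) s := by
    intro s
    simpa using ((hasDerivAt_pow 2 s).div_const 2).const_mul (L * ‖v‖ ^ 2)
  have hbound : ∀ s ∈ Ico (0 : ℝ) 1, ‖F' (a + s • v) v - F' a v‖ ≤ L * ‖v‖ ^ 2 * s := by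
    intro s hs
    calc ‖F' (a + s • v) v - F' a v‖ ≤ ‖F' (a + s • v) - F' a‖ * ‖v‖ :=
          (F' (a + s • v) - F' a).le_opNorm v
      _ ≤ L * (s * ‖v‖) * ‖v‖ := by
          gcongr
          simpa [norm_smul, abs_of_nonneg hs.1] using hL (a + s • v)
      _ = L * ‖v‖ ^ 2 * s := by ring
  have hf1 := image_norm_le_of_norm_deriv_right_le_deriv_boundary
    (fun s _ => (hf s).continuousAt.continuousWithinAt) (fun s _ => (hf s).hasDerivWithinAt)
    (by simp [f]) hB hbound (right_mem_Icc.mpr zero_le_one)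
  have hf1_eq : f 1 = F b - F a - F' a v := by simp [f, v]
  rw [hf1_eq] at hf1
  linarith
end Taylor

section Coercive

variable {H : Type*} [NormedAddCommGroup H] [InnerProductSpace ℝ H]

theorem isUnit_of_coercive [CompleteSpace H] (A : H →L[ℝ] H) {c : ℝ} (hc : 0 < c)
    (hA : ∀ u, c * ‖u‖ * ‖u‖ ≤ ⟪A u, u⟫) : IsUnit A := by
  have hcoer : IsCoercive ((innerSL ℝ).comp A) := ⟨c, hc, hA⟩
  refine ⟨hcoer.continuousLinearEquivOfBilin.toUnit, ?_⟩
  ext v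
  exact ext_inner_right ℝ (hcoer.continuousLinearEquivOfBilin_apply v)

theorem norm_le_norm_apply_div_of_coercive (A : H →L[ℝ] H) {c : ℝ} (hc : 0 < c)
    (hA : ∀ u, c * ‖u‖ * ‖u‖ ≤ ⟪A u, u⟫) (u : H) : ‖u‖ ≤ ‖A u‖ / c := by
  rw [le_div_iff₀ hc]
  rcases eq_or_ne u 0 with rfl | hu
  · simp
  · nlinarith [hA u, real_inner_le_norm (A u) u, norm_pos_iff.2 hu]

theorem coercive_add_smul_one (T : H →L[ℝ] H) (hT : ∀ ξ, 0 ≤ ⟪T ξ, ξ⟫) (c : ℝ) (u : H) :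
    c * ‖u‖ * ‖u‖ ≤ ⟪(T + c • (1 : H →L[ℝ] H)) u, u⟫ := by
  simp only [add_apply, smul_apply, one_apply_eq_self, inner_add_left, real_inner_smul_left,
    real_inner_self_eq_norm_mul_norm]
  linarith [hT u]

theorem inner_neg_le_of_coercive (A : H →L[ℝ] H) {c : ℝ} (hc : 0 < c)
    (hA : ∀ u, c * ‖u‖ * ‖u‖ ≤ ⟪A u, u⟫) {w g : H} (hw : A w = g) (v : H) :
    ⟪-w, v⟫ ≤ -‖v‖ ^ 2 + ‖A v - g‖ / c * ‖v‖ := by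
  have hsplit : ⟪-w, v⟫ = -‖v‖ ^ 2 + ⟪v - w, v⟫ := by
    rw [inner_sub_left, inner_neg_left, real_inner_self_eq_norm_sq]
    ring
  have hdefect : ‖v - w‖ ≤ ‖A v - g‖ / c := by
    simpa [map_sub, hw] using norm_le_norm_apply_div_of_coercive A hc hA (v - w)
  calc ⟪-w, v⟫ = -‖v‖ ^ 2 + ⟪v - w, v⟫ := hsplit
    _ ≤ -‖v‖ ^ 2 + ‖v - w‖ * ‖v‖ := by gcongr; exact real_inner_le_norm _ _
    _ ≤ -‖v‖ ^ 2 + ‖A v - g‖ / c * ‖v‖ := by gcongr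
end Coercive

theorem newton_regularized_key_estimate_general
    {H : Type*} [NormedAddCommGroup H] [InnerProductSpace ℝ H] [CompleteSpace H]
    (F : H → H) (F' : H → H →L[ℝ] H) (F'' : H → H →L[ℝ] H →L[ℝ] H) (N₂ : ℝ)
    (hF' : ∀ x : H, HasFDerivAt F (F' x) x)
    (hF'' : ∀ x : H, HasFDerivAt F' (F'' x) x)
    (hpos : ∀ h ξ : H, 0 ≤ ⟪F' h ξ, ξ⟫)
    (hN₂ : ∀ x : H, ‖F'' x‖ ≤ N₂)
    (ε : ℝ → ℝ) (hεpos : ∀ t ∈ Ici (0 : ℝ), 0 < ε t)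
    (z₀ : H) (x : ℝ → H)
    (hx : ∀ t ∈ Ici (0 : ℝ), F (x t) + ε t • (x t - z₀) = 0) :
    ∀ h : H, ∀ t ∈ Ici (0 : ℝ),
      ⟪-(Ring.inverse (F' h + ε t • (1 : H →L[ℝ] H)) (F h + ε t • (h - z₀))), h - x t⟫ ≤
        -‖h - x t‖ ^ 2 + N₂ / (2 * ε t) * ‖h - x t‖ ^ 3 := by
  intro h t ht
  have hε := hεpos t ht
  set A := F' h + ε t • (1 : H →L[ℝ] H)
  set g := F h + ε t • (h - z₀)
  have hA := coercive_add_smul_one (F' h) (hpos h) (ε t)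
  have hAw : A (Ring.inverse A g) = g := by
    change (A * Ring.inverse A) g = g
    rw [Ring.mul_inverse_cancel A (isUnit_of_coercive A hε hA), one_apply_eq_self]
  have hdefect : A (h - x t) - g = F (x t) - F h - F' h (x t - h) := by
    simp only [A, g, add_apply, smul_apply, one_apply_eq_self, map_sub]
    rw [eq_neg_of_add_eq_zero_left (hx t ht)]
    module
  have htaylor : ‖A (h - x t) - g‖ ≤ N₂ / 2 * ‖h - x t‖ ^ 2 := by
    rw [hdefect, norm_sub_rev h]
    refine norm_image_sub_sub_fderiv_le_of_lipschitz F F' N₂ hF' h (x t) fun y => ?_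
    exact Convex.norm_image_sub_le_of_norm_hasFDerivWithin_le
      (fun z _ => (hF'' z).hasFDerivWithinAt) (fun z _ => hN₂ z) convex_univ
      (mem_univ h) (mem_univ y)
  calc _ ≤ -‖h - x t‖ ^ 2 + ‖A (h - x t) - g‖ / ε t * ‖h - x t‖ :=
        inner_neg_le_of_coercive A hε hA hAw (h - x t)
    _ ≤ -‖h - x t‖ ^ 2 + N₂ / 2 * ‖h - x t‖ ^ 2 / ε t * ‖h - x t‖ := by gcongr
    _ = -‖h - x t‖ ^ 2 + N₂ / (2 * ε t) * ‖h - x t‖ ^ 3 := by field_simp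

/-- **Key estimate for the regularized continuous Newton method.**
Let `H` be a real Hilbert space, `F : H → H` twice Fréchet differentiable with
`⟪F′(h) ξ, ξ⟫ ≥ 0` and `‖F′(x)‖ ≤ N₁`, `‖F″(x)‖ ≤ N₂`.  Let `ε : [0,∞) → (0,∞)`, `z₀ ∈ H`,
and for each `t` let `x t` denote the (unique) solution of `F x + ε t (x − z₀) = 0`.
Define `Φ(h,t) := −[F′(h) + ε t I]⁻¹ [F h + ε t (h − z₀)]`.  Then for all `h ∈ H`, `t ≥ 0`:
`⟪Φ(h,t), h − x t⟫ ≤ −‖h − x t‖² + (N₂ / (2 ε t)) ‖h − x t‖³`. -/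
theorem newton_regularized_key_estimate
    {H : Type*} [NormedAddCommGroup H] [InnerProductSpace ℝ H] [CompleteSpace H]
    (F : H → H) (F' : H → H →L[ℝ] H) (F'' : H → H →L[ℝ] H →L[ℝ] H) (N₁ N₂ : ℝ)
    (hF' : ∀ x : H, HasFDerivAt F (F' x) x)
    (hF'' : ∀ x : H, HasFDerivAt F' (F'' x) x)
    (hpos : ∀ h ξ : H, 0 ≤ ⟪F' h ξ, ξ⟫)
    (hN₁ : ∀ x : H, ‖F' x‖ ≤ N₁)
    (hN₂ : ∀ x : H, ‖F'' x‖ ≤ N₂)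
    (ε : ℝ → ℝ) (hεpos : ∀ t ∈ Ici (0 : ℝ), 0 < ε t)
    (z₀ : H) (x : ℝ → H)
    (hx : ∀ t ∈ Ici (0 : ℝ), F (x t) + ε t • (x t - z₀) = 0) :
    ∀ h : H, ∀ t ∈ Ici (0 : ℝ),
      ⟪-(Ring.inverse (F' h + ε t • (1 : H →L[ℝ] H)) (F h + ε t • (h - z₀))), h - x t⟫ ≤
        -‖h - x t‖ ^ 2 + N₂ / (2 * ε t) * ‖h - x t‖ ^ 3 :=
  newton_regularized_key_estimate_general F F' F'' N₂ hF' hF'' hpos hN₂ ε hεpos z₀ x hx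
end

section
/- Let ν : [0,∞) → ℝ be locally integrable, and suppose there exists T ≥ 0 such that ν ∈ C¹[T,∞), ν(t) > 0 for t ∈ [T,∞), and −ν̇(t)/ν(t)² ≤ C for all t ∈ [T,∞) and some constant C. Then ∫₀^t ν(τ) dτ → +∞ as t → +∞. -/
/-!
Since `-ν'/ν² = (1/ν)'` is bounded by `c := max C 1`, the reciprocal `1/ν` grows at most linearly
on `[T, ∞)`, so `ν` dominates `t ↦ 1 / (1/ν(T) + c (t - T))`, whose integral grows like `log t / c`.
-/

open Set Filter MeasureTheory

theorem le_add_mul_sub_of_hasDerivWithinAt_le {g g' : ℝ → ℝ} {T C t : ℝ}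
    (hg : ∀ x ∈ Ici T, HasDerivWithinAt g (g' x) (Ici T) x) (hg' : ∀ x ∈ Ici T, g' x ≤ C)
    (ht : T ≤ t) : g t ≤ g T + C * (t - T) := by
  refine image_le_of_deriv_right_le_deriv_boundary (B := fun x => g T + C * (x - T))
    (fun x hx => (hg x hx.1).continuousWithinAt.mono Icc_subset_Ici_self)
    (fun x hx => (hg x hx.1).mono (Ici_subset_Ici.2 hx.1)) (by simp) (by fun_prop)
    (fun x _ => ?_) (fun x hx => hg' x hx.1) ⟨ht, le_rfl⟩
  simpa using (((hasDerivWithinAt_id x _).sub_const T).const_mul C).const_add (g T)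

theorem inv_add_mul_sub_le_of_neg_deriv_div_sq_le {ν ν' : ℝ → ℝ} {T C t : ℝ}
    (hd : ∀ x ∈ Ici T, HasDerivWithinAt ν (ν' x) (Ici T) x) (hpos : ∀ x ∈ Ici T, 0 < ν x)
    (hbound : ∀ x ∈ Ici T, -ν' x / ν x ^ 2 ≤ C) (ht : T ≤ t) :
    ((ν T)⁻¹ + C * (t - T))⁻¹ ≤ ν t := by
  have hinv : (ν t)⁻¹ ≤ (ν T)⁻¹ + C * (t - T) :=
    le_add_mul_sub_of_hasDerivWithinAt_le (fun x hx => (hd x hx).inv (hpos x hx).ne') hbound ht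
  simpa using inv_anti₀ (inv_pos.2 (hpos t ht)) hinv

theorem tendsto_integral_inv_affine_atTop {a c T : ℝ} (ha : 0 < a) (hc : 0 < c) :
    Tendsto (fun t => ∫ τ in T..t, (a + c * (τ - T))⁻¹) atTop atTop := by
  have hint : ∀ t ≥ T,
      ∫ τ in T..t, (a + c * (τ - T))⁻¹ = c⁻¹ * Real.log ((a + c * (t - T)) / a) := by
    intro t ht
    have hlin : ∀ τ, a + c * (τ - T) = c * τ + (a - c * T) := fun τ => by ring
    simp_rw [hlin, intervalIntegral.integral_comp_mul_add (fun x => x⁻¹) hc.ne', smul_eq_mul]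
    rw [integral_inv_of_pos (by linarith) (by nlinarith)]
    congr 3; ring
  refine Tendsto.congr' (eventually_ge_atTop T |>.mono fun t ht => (hint t ht).symm) ?_
  refine (Real.tendsto_log_atTop.comp ?_).const_mul_atTop (inv_pos.2 hc)
  refine Tendsto.atTop_div_const ha (tendsto_atTop_add_const_left _ _ ?_)
  exact (tendsto_atTop_add_const_right _ _ tendsto_id).const_mul_atTop hc

theorem tendsto_intervalIntegral_atTop_of_le {f g : ℝ → ℝ} {a T : ℝ}
    (hf : ∀ b, IntervalIntegrable f volume a b) (hg : ContinuousOn g (Ici T))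
    (hgf : ∀ τ ∈ Ici T, g τ ≤ f τ) (hg_top : Tendsto (fun t => ∫ τ in T..t, g τ) atTop atTop) :
    Tendsto (fun t => ∫ τ in a..t, f τ) atTop atTop := by
  refine tendsto_atTop_mono' atTop ?_ (tendsto_atTop_add_const_left _ (∫ τ in a..T, f τ) hg_top)
  filter_upwards [eventually_ge_atTop T] with t ht
  have hfT : IntervalIntegrable f volume T t := (hf T).symm.trans (hf t)
  have hgT : IntervalIntegrable g volume T t :=
    (hg.mono (by rw [uIcc_of_le ht]; exact Icc_subset_Ici_self)).intervalIntegrable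
  rw [← intervalIntegral.integral_add_adjacent_intervals (hf T) hfT]
  gcongr
  exact intervalIntegral.integral_mono_on ht hgT hfT fun τ hτ => hgf τ hτ.1

theorem integral_diverges_of_derivative_bound_general
    (ν : ℝ → ℝ) (ν' : ℝ → ℝ) (T C : ℝ)
    (hloc : ∀ b : ℝ, IntervalIntegrable ν volume 0 b)
    (hd : ∀ t ∈ Ici T, HasDerivWithinAt ν (ν' t) (Ici T) t)
    (hpos : ∀ t ∈ Ici T, 0 < ν t)
    (hbound : ∀ t ∈ Ici T, -ν' t / ν t ^ 2 ≤ C) :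
    Tendsto (fun t : ℝ => ∫ τ in (0 : ℝ)..t, ν τ) atTop atTop := by
  set c := max C 1
  have hc : 0 < c := one_pos.trans_le (le_max_right _ _)
  have ha : 0 < (ν T)⁻¹ := inv_pos.2 (hpos T self_mem_Ici)
  have hcont : ContinuousOn (fun τ => ((ν T)⁻¹ + c * (τ - T))⁻¹) (Ici T) := by
    refine ContinuousOn.inv₀ (by fun_prop) fun τ hτ => ?_
    have : 0 ≤ c * (τ - T) := mul_nonneg hc.le (sub_nonneg.2 hτ)
    positivity
  exact tendsto_intervalIntegral_atTop_of_le hloc hcont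
    (fun τ hτ => inv_add_mul_sub_le_of_neg_deriv_div_sq_le hd hpos
      (fun x hx => (hbound x hx).trans (le_max_left _ _)) hτ)
    (tendsto_integral_inv_affine_atTop ha hc)

/-- **Divergence of the integral (Lemma 3.6).**
Let `ν : [0,∞) → ℝ` be locally integrable and suppose there are `T ≥ 0` and a constant `C`
such that `ν ∈ C¹[T,∞)`, `ν t > 0` on `[T,∞)` and `−ν̇ t / ν t ² ≤ C` on `[T,∞)`.
Then `∫₀ᵗ ν → +∞` as `t → +∞`. -/
theorem integral_diverges_of_derivative_bound
    (ν : ℝ → ℝ) (ν' : ℝ → ℝ) (T C : ℝ) (hT : 0 ≤ T)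
    (hloc : ∀ b : ℝ, IntervalIntegrable ν volume 0 b)
    (hd : ∀ t ∈ Ici T, HasDerivWithinAt ν (ν' t) (Ici T) t)
    (hd'c : ContinuousOn ν' (Ici T))
    (hpos : ∀ t ∈ Ici T, 0 < ν t)
    (hbound : ∀ t ∈ Ici T, -ν' t / ν t ^ 2 ≤ C) :
    Tendsto (fun t : ℝ => ∫ τ in (0 : ℝ)..t, ν τ) atTop atTop :=
  integral_diverges_of_derivative_bound_general ν ν' T C hloc hd hpos hbound
end

section
/- Let H be a real Hilbert space and F : H → H be compact and twice Fréchet differentiable with ‖F′(x)‖ ≤ N₁ and ‖F″(x)‖ ≤ N₂ for all x ∈ H, and suppose F(z) = 0 has a unique solution y. Let T(h) := F′*(h)F′(h), T_ε(h) := T(h) + εI, and for fixed ξ ∈ H let P_ε(ξ) be the spectral projection of the nonnegative self-adjoint compact operator T(ξ) associated with the interval [ε, N₁²] (the orthogonal projection onto the closed span of the eigenspaces of T(ξ) with eigenvalues ≥ ε). Assume there exist ξ ∈ H and ε₀ > 0 such that C := sup_{ε∈(0,ε₀]} ‖P_ε(ξ)T_ε^{-1}(ξ)(T(y) − T(ξ))‖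 < 1/2, and let ε : [0,∞) → (0,ε₀]. Define Φ(h,t) := (P_{ε(t)}(ξ) − I)(h − z₀) − P_{ε(t)}(ξ)T^{-1}_{ε(t)}(h)F′*(h)F(h). Then for all h ∈ H and t ≥ 0: (Φ(h,t), h − y) ≤ α(t)‖h − y‖ − γ‖h − y‖² + σ(t)‖h − y‖³, where γ := 1/2 − C > 0, σ(t) := N₁N₂/ε(t) + N₂/(4√ε(t)), and α(t) := ‖(P_{ε(t)}(ξ) − I)(y − z₀)‖. -/
open Set Filter
open scoped RealInnerProductSpace

/-- The operator `T(h) := F′*(h) F′(h)` associated with a family of Fréchet derivatives. -/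
noncomputable def gaussNewtonT {H : Type*} [NormedAddCommGroup H] [InnerProductSpace ℝ H]
    [CompleteSpace H] (F' : H → H →L[ℝ] H) (h : H) : H →L[ℝ] H :=
  ContinuousLinearMap.adjoint (F' h) ∘L F' h

/-- The spectral projection `P_ε(A)` of a (nonnegative self-adjoint compact) operator `A`
associated with the interval `[ε, ∞)`: the orthogonal projection of `H` onto the closed span
of the eigenspaces of `A` with eigenvalues `≥ ε`. -/
noncomputable def specProj {H : Type*} [NormedAddCommGroup H] [InnerProductSpace ℝ H]
    [CompleteSpace H] (A : H →L[ℝ] H) (e : ℝ) : H →L[ℝ] H :=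
  ((⨆ s ∈ Set.Ici e, Module.End.eigenspace (A : H →ₗ[ℝ] H) s).topologicalClosure).subtypeL ∘L
    Submodule.orthogonalProjection
      (⨆ s ∈ Set.Ici e, Module.End.eigenspace (A : H →ₗ[ℝ] H) s).topologicalClosure

section gnAuxHelpers
open ContinuousLinearMap
variable {H : Type*} [NormedAddCommGroup H] [InnerProductSpace ℝ H] [CompleteSpace H]

set_option linter.unusedSectionVars false

lemma gnAux_exists_inv {S : H →L[ℝ] H} (hpos : ∀ x : H, 0 ≤ ⟪S x, x⟫) {e : ℝ} (he : 0 < e) :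
    ∃ Q : H →L[ℝ] H, Q ∘L (S + e • 1) = 1 ∧ (S + e • 1) ∘L Q = 1 := by
  set Se := S + e • (1 : H →L[ℝ] H) with hSe
  have hSeap : ∀ v : H, Se v = S v + e • v := fun v => by simp [hSe]
  have hcoer : IsCoercive ((innerSL ℝ).comp Se) := by
    refine ⟨e, he, fun u => ?_⟩
    have h1 : ((innerSL ℝ).comp Se) u u = ⟪S u, u⟫ + e * (‖u‖ * ‖u‖) := by
      simp [hSeap, inner_add_left, real_inner_smul_left, real_inner_self_eq_norm_mul_norm]; exact Or.inl (sq _)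
    rw [h1]
    nlinarith [hpos u]
  have hE : ∀ v, hcoer.continuousLinearEquivOfBilin v = Se v := fun v =>
    ext_inner_right ℝ fun w => by
      rw [hcoer.continuousLinearEquivOfBilin_apply]; rfl
  refine ⟨hcoer.continuousLinearEquivOfBilin.symm, ?_, ?_⟩
  · ext v
    simp [← hE v]
  · ext v
    have := hE (hcoer.continuousLinearEquivOfBilin.symm v)
    simp [← this]

lemma gnAux_ringInverse_eq {Se Q : H →L[ℝ] H} (h1 : Q ∘L Se = 1) (h2 : Se ∘L Q = 1) :
    Ring.inverse Se = Q :=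
  Ring.inverse_unit ⟨Se, Q, h2, h1⟩

lemma gnAux_inv_norm {S Q : H →L[ℝ] H} (hpos : ∀ x : H, 0 ≤ ⟪S x, x⟫) {e : ℝ} (he : 0 < e)
    (h2 : (S + e • 1) ∘L Q = 1) (v : H) : ‖Q v‖ ≤ ‖v‖ / e := by
  set x := Q v with hx
  have hv : S x + e • x = v := by
    have := congrArg (fun (A : H →L[ℝ] H) => A v) h2
    simpa using this
  have h3 : e * (‖x‖ * ‖x‖) ≤ ⟪v, x⟫ := by
    rw [← hv, inner_add_left, real_inner_smul_left, real_inner_self_eq_norm_mul_norm]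
    linarith [hpos x]
  have h4 : ⟪v, x⟫ ≤ ‖v‖ * ‖x‖ := real_inner_le_norm v x
  rw [le_div_iff₀ he]
  rcases (norm_nonneg x).eq_or_lt with h | h
  · rw [← h]; simpa using norm_nonneg v
  · nlinarith

lemma gnAux_inv_adjoint_norm {A Q : H →L[ℝ] H} {e : ℝ} (he : 0 < e)
    (h2 : ((ContinuousLinearMap.adjoint A ∘L A) + e • 1) ∘L Q = 1) (v : H) :
    ‖Q (ContinuousLinearMap.adjoint A v)‖ ≤ ‖v‖ / (2 * Real.sqrt e) := by
  set x := Q (ContinuousLinearMap.adjoint A v) with hx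
  have hv : ContinuousLinearMap.adjoint A (A x) + e • x = ContinuousLinearMap.adjoint A v := by
    have := congrArg (fun (B : H →L[ℝ] H) => B (ContinuousLinearMap.adjoint A v)) h2
    simpa using this
  have h3 : ‖A x‖ * ‖A x‖ + e * (‖x‖ * ‖x‖) = ⟪v, A x⟫ := by
    have := congrArg (fun z => ⟪z, x⟫) hv
    simp only [inner_add_left, real_inner_smul_left, ContinuousLinearMap.adjoint_inner_left] at this
    rw [real_inner_self_eq_norm_mul_norm, real_inner_self_eq_norm_mul_norm] at this
    exact this
  have h4 : ⟪v, A x⟫ ≤ ‖v‖ * ‖A x‖ := real_inner_le_norm v (A x)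
  have h5 : e * (‖x‖ * ‖x‖) ≤ ‖v‖ * ‖v‖ / 4 := by
    nlinarith [norm_nonneg (A x), norm_nonneg v, sq_nonneg (‖A x‖ - ‖v‖ / 2)]
  have hse : (0:ℝ) < Real.sqrt e := Real.sqrt_pos.mpr he
  rw [le_div_iff₀ (by positivity)]
  rcases (norm_nonneg x).eq_or_lt with h | h
  · rw [← h]; simpa using norm_nonneg v
  · nlinarith [Real.sq_sqrt he.le, norm_nonneg v, mul_nonneg hse.le (norm_nonneg x)]

lemma gnAux_coercive_on_iSup {S : H →ₗ[ℝ] H} (hsym : S.IsSymmetric) {e : ℝ}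
    {x : H} (hx : x ∈ ⨆ s ∈ Set.Ici e, Module.End.eigenspace S s) :
    e * (‖x‖ * ‖x‖) ≤ ⟪S x, x⟫ := by
  classical
  rw [iSup_subtype'] at hx
  rw [Submodule.mem_iSup_iff_exists_dfinsupp'] at hx
  obtain ⟨f, rfl⟩ := hx
  rw [DFinsupp.sum]
  set s := f.support
  have horth : ∀ i ∈ s, ∀ j ∈ s, i ≠ j → ⟪(f i : H), (f j : H)⟫ = 0 := by
    intro i _ j _ hij
    exact hsym.orthogonalFamily_eigenspaces (Subtype.coe_injective.ne hij) (f i) (f j)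
  have hdiag : ∀ i ∈ s, ⟪(f i : H), ∑ j ∈ s, (f j : H)⟫ = ‖(f i : H)‖ * ‖(f i : H)‖ := by
    intro i hi
    rw [inner_sum]
    rw [Finset.sum_eq_single i (fun j hj hji => horth i hi j hj hji.symm)
      (by intro h; exact absurd hi h)]
    exact real_inner_self_eq_norm_mul_norm _
  have hS : ∀ i : Set.Ici e, S (f i : H) = (i : ℝ) • (f i : H) := fun i =>
    Module.End.mem_eigenspace_iff.mp (f i).2
  have hSsum : ⟪S (∑ j ∈ s, (f j : H)), ∑ j ∈ s, (f j : H)⟫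
      = ∑ i ∈ s, (i : ℝ) * (‖(f i : H)‖ * ‖(f i : H)‖) := by
    rw [map_sum, sum_inner]
    exact Finset.sum_congr rfl fun i hi => by
      rw [hS i, real_inner_smul_left, hdiag i hi]
  have hnorm : ‖∑ j ∈ s, (f j : H)‖ * ‖∑ j ∈ s, (f j : H)‖
      = ∑ i ∈ s, ‖(f i : H)‖ * ‖(f i : H)‖ := by
    rw [← real_inner_self_eq_norm_mul_norm, sum_inner]
    exact Finset.sum_congr rfl fun i hi => hdiag i hi
  rw [hSsum, hnorm, Finset.mul_sum]
  refine Finset.sum_le_sum fun i _ => ?_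
  have : e ≤ (i : ℝ) := i.2
  nlinarith [mul_self_nonneg ‖(f i : H)‖]

lemma gnAux_specProj_inv_norm {S Q : H →L[ℝ] H} (hsym : ∀ x y : H, ⟪S x, y⟫ = ⟪x, S y⟫)
    {e : ℝ} (he : 0 < e)
    (h1 : Q ∘L (S + e • 1) = 1) (h2 : (S + e • 1) ∘L Q = 1) (v : H) :
    ‖specProj S e (Q v)‖ ≤ ‖v‖ / (2 * e) := by
  classical
  set M := ⨆ s ∈ Set.Ici e, Module.End.eigenspace ((S : H →ₗ[ℝ] H)) s with hM
  set K := M.topologicalClosure with hK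
  have hsym' : (S : H →ₗ[ℝ] H).IsSymmetric := fun x y => hsym x y
  have hQSe : ∀ x : H, Q (S x + e • x) = x := by
    intro x
    have := congrArg (fun (B : H →L[ℝ] H) => B x) h1
    simpa using this
  have hSeQ : ∀ x : H, S (Q x) + e • Q x = x := by
    intro x
    have := congrArg (fun (B : H →L[ℝ] H) => B x) h2
    simpa using this
  -- S preserves M
  have hSM : ∀ x ∈ M, S x ∈ M := by
    intro x hx
    rw [hM, iSup_subtype'] at hx ⊢
    refine Submodule.iSup_induction (motive := fun w => S w ∈ _) _ hx (fun i z hz => ?_)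
      (by simp) (fun a b ha hb => by rw [map_add]; exact Submodule.add_mem _ ha hb)
    have : S z = (i : ℝ) • z := Module.End.mem_eigenspace_iff.mp hz
    rw [this]
    exact Submodule.mem_iSup_of_mem i (Submodule.smul_mem _ _ hz)
  -- S preserves K
  have hSK : ∀ x ∈ K, S x ∈ K := by
    intro x hx
    have h1' : S x ∈ S '' closure (M : Set H) := ⟨x, hx, rfl⟩
    have h2' : S '' closure (M : Set H) ⊆ closure (S '' (M : Set H)) :=
      image_closure_subset_closure_image S.continuous
    have h3' : closure (S '' (M : Set H)) ⊆ closure (K : Set H) := by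
      apply closure_mono
      rintro _ ⟨z, hz, rfl⟩
      exact Submodule.le_topologicalClosure M (hSM z hz)
    have : S x ∈ closure (K : Set H) := h3' (h2' h1')
    rwa [M.isClosed_topologicalClosure.closure_eq] at this
  -- coercivity on K
  have hcoK : ∀ x ∈ K, e * (‖x‖ * ‖x‖) ≤ ⟪S x, x⟫ := by
    intro x hx
    have hclosed : IsClosed {z : H | e * (‖z‖ * ‖z‖) ≤ ⟪S z, z⟫} := by
      apply isClosed_le
      · exact (continuous_const.mul ((continuous_norm).mul (continuous_norm)))
      · exact Continuous.inner S.continuous continuous_id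
    have hsub : (M : Set H) ⊆ {z : H | e * (‖z‖ * ‖z‖) ≤ ⟪S z, z⟫} := fun z hz =>
      gnAux_coercive_on_iSup hsym' hz
    exact closure_minimal hsub hclosed hx
  -- S preserves Kᗮ
  have hSKp : ∀ x ∈ Kᗮ, S x ∈ Kᗮ := by
    intro x hx
    rw [Submodule.mem_orthogonal]
    intro u hu
    rw [← hsym u x]
    exact (Submodule.mem_orthogonal K x).mp hx (S u) (hSK u hu)
  -- Q preserves K
  have hdecomp : ∀ z : H, (z - (Submodule.orthogonalProjection K z : H)) ∈ Kᗮ := fun z =>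
    Submodule.sub_starProjection_mem_orthogonal (K := K) z
  have hzero : ∀ z : H, z ∈ K → z ∈ Kᗮ → z = 0 := by
    intro z hz hz'
    have : ⟪z, z⟫ = 0 := (Submodule.mem_orthogonal K z).mp hz' z hz
    exact inner_self_eq_zero.mp this
  have hQK : ∀ k, k ∈ K → Q k ∈ K := by
    intro k hk
    set a : H := (Submodule.orthogonalProjection K (Q k) : H) with ha
    set b : H := Q k - a with hb
    have haK : a ∈ K := (Submodule.orthogonalProjection K (Q k)).2
    have hbKp : b ∈ Kᗮ := hdecomp (Q k)
    have hSea : S a + e • a ∈ K := Submodule.add_mem _ (hSK a haK) (Submodule.smul_mem _ _ haK)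
    have hSeb : S b + e • b ∈ Kᗮ := Submodule.add_mem _ (hSKp b hbKp) (Submodule.smul_mem _ _ hbKp)
    have hsum : (S a + e • a) + (S b + e • b) = k := by
      have : S (Q k) + e • Q k = k := hSeQ k
      rw [← this]
      have hab : a + b = Q k := by rw [hb]; abel
      rw [← hab]
      rw [map_add, smul_add]
      abel
    have hSebK : S b + e • b ∈ K := by
      have : S b + e • b = k - (S a + e • a) := by rw [← hsum]; abel
      rw [this]
      exact Submodule.sub_mem _ hk hSea
    have hb0 : b = 0 := by
      have h0 : S b + e • b = 0 := hzero _ hSebK hSeb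
      have := hQSe b
      rw [h0] at this
      rw [← this]
      exact map_zero Q
    have : Q k = a := by rw [← sub_eq_zero, ← hb]; exact hb0
    rw [this]; exact haK
  have hQKp : ∀ m, m ∈ Kᗮ → Q m ∈ Kᗮ := by
    intro m hm
    set a : H := (Submodule.orthogonalProjection K (Q m) : H) with ha
    set b : H := Q m - a with hb
    have haK : a ∈ K := (Submodule.orthogonalProjection K (Q m)).2
    have hbKp : b ∈ Kᗮ := hdecomp (Q m)
    have hSea : S a + e • a ∈ K := Submodule.add_mem _ (hSK a haK) (Submodule.smul_mem _ _ haK)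
    have hSeb : S b + e • b ∈ Kᗮ := Submodule.add_mem _ (hSKp b hbKp) (Submodule.smul_mem _ _ hbKp)
    have hsum : (S a + e • a) + (S b + e • b) = m := by
      have : S (Q m) + e • Q m = m := hSeQ m
      rw [← this]
      have hab : a + b = Q m := by rw [hb]; abel
      rw [← hab, map_add, smul_add]
      abel
    have hSeaKp : S a + e • a ∈ Kᗮ := by
      have : S a + e • a = m - (S b + e • b) := by rw [← hsum]; abel
      rw [this]
      exact Submodule.sub_mem _ hm hSeb
    have ha0 : a = 0 := by
      have h0 : S a + e • a = 0 := hzero _ hSea hSeaKp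
      have := hQSe a
      rw [h0] at this
      rw [← this]
      exact map_zero Q
    have : Q m = b := by rw [hb, ha0]; abel
    rw [this]; exact hbKp
  -- commutation and conclusion
  have hPap : ∀ z : H, specProj S e z = (Submodule.orthogonalProjection K z : H) := fun z => rfl
  set Pv : H := (Submodule.orthogonalProjection K v : H) with hPv
  have hPvK : Pv ∈ K := (Submodule.orthogonalProjection K v).2
  have hcomm : specProj S e (Q v) = Q Pv := by
    have hQsplit : Q v = Q Pv + Q (v - Pv) := by
      rw [map_sub]; abel
    have h1' : ((Submodule.orthogonalProjection K (Q Pv)) : H) = Q Pv :=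
      Submodule.starProjection_eq_self_iff.mpr (hQK Pv hPvK)
    have h2' : Submodule.orthogonalProjection K (Q (v - Pv)) = 0 :=
      Submodule.orthogonalProjectionOnto_apply_of_mem_orthogonal
        (hQKp _ (hdecomp v))
    rw [hPap, hQsplit, map_add, Submodule.coe_add, h1', h2']
    simp
  rw [hcomm]
  -- norm bound
  set w : H := Q Pv with hw
  have hwK : w ∈ K := hQK Pv hPvK
  have hco : e * (‖w‖ * ‖w‖) ≤ ⟪S w, w⟫ := hcoK w hwK
  have hSew : ⟪S w, w⟫ + e * (‖w‖ * ‖w‖) = ⟪Pv, w⟫ := by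
    have := hSeQ Pv
    have h' := congrArg (fun z => ⟪z, w⟫) this
    simp only [inner_add_left, real_inner_smul_left] at h'
    rw [real_inner_self_eq_norm_mul_norm] at h'
    exact h'
  have hCS : ⟪Pv, w⟫ ≤ ‖Pv‖ * ‖w‖ := real_inner_le_norm _ _
  have hPvle : ‖Pv‖ ≤ ‖v‖ := by
    have := Submodule.orthogonalProjectionOnto_norm_le K
    calc ‖Pv‖ = ‖Submodule.orthogonalProjection K v‖ := rfl
    _ ≤ ‖Submodule.orthogonalProjection K‖ * ‖v‖ := (Submodule.orthogonalProjection K).le_opNorm v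
    _ ≤ 1 * ‖v‖ := by
        exact mul_le_mul_of_nonneg_right this (norm_nonneg v)
    _ = ‖v‖ := one_mul _
  rw [le_div_iff₀ (by positivity)]
  rcases (norm_nonneg w).eq_or_lt with h | h
  · rw [← h]; simpa using norm_nonneg v
  · nlinarith

lemma gnAux_specProj_norm_le (S : H →L[ℝ] H) (e : ℝ) (z : H) : ‖specProj S e z‖ ≤ ‖z‖ := by
  set K := (⨆ s ∈ Set.Ici e, Module.End.eigenspace ((S : H →ₗ[ℝ] H)) s).topologicalClosure
  calc ‖specProj S e z‖ = ‖(Submodule.orthogonalProjection K z : H)‖ := rfl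
  _ = ‖Submodule.orthogonalProjection K z‖ := rfl
  _ ≤ ‖Submodule.orthogonalProjection K‖ * ‖z‖ := (Submodule.orthogonalProjection K).le_opNorm z
  _ ≤ 1 * ‖z‖ := mul_le_mul_of_nonneg_right (Submodule.orthogonalProjectionOnto_norm_le K) (norm_nonneg z)
  _ = ‖z‖ := one_mul _

lemma gnAux_taylor {F : H → H} {F' : H → H →L[ℝ] H} {N₂ : ℝ}
    (hF' : ∀ x : H, HasFDerivAt F (F' x) x)
    (hLip : ∀ x x' : H, ‖F' x - F' x'‖ ≤ N₂ * ‖x - x'‖) (h y : H) :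
    ‖F y - F h - F' h (y - h)‖ ≤ N₂ / 2 * (‖y - h‖ * ‖y - h‖) := by
  set v := y - h with hv
  set g : ℝ → H := fun s => F (h + s • v) - s • (F' h v) - F h with hg
  set g' : ℝ → H := fun s => F' (h + s • v) v - F' h v with hg'
  have hder : ∀ s : ℝ, HasDerivAt g (g' s) s := by
    intro s
    have hin : HasDerivAt (fun s : ℝ => h + s • v) v s := by
      simpa using ((hasDerivAt_id s).smul_const v).const_add h
    have h1 : HasDerivAt (fun s : ℝ => F (h + s • v)) (F' (h + s • v) v) s := by
      exact (hF' (h + s • v)).comp_hasDerivAt s hin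
    have h2 : HasDerivAt (fun s : ℝ => s • (F' h v)) (F' h v) s := by
      simpa using (hasDerivAt_id s).smul_const (F' h v)
    exact (h1.sub h2).sub_const (F h)
  have hbound : ∀ s ∈ Ico (0:ℝ) 1, ‖g' s‖ ≤ (N₂ * (‖v‖ * ‖v‖)) * s := by
    intro s hs
    have h1 : ‖g' s‖ ≤ ‖F' (h + s • v) - F' h‖ * ‖v‖ := by
      have : g' s = (F' (h + s • v) - F' h) v := by simp [hg']
      rw [this]
      exact (F' (h + s • v) - F' h).le_opNorm v
    have h2 : ‖F' (h + s • v) - F' h‖ ≤ N₂ * (s * ‖v‖) := by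
      have := hLip (h + s • v) h
      simpa [norm_smul, abs_of_nonneg hs.1] using this
    calc ‖g' s‖ ≤ (N₂ * (s * ‖v‖)) * ‖v‖ :=
          h1.trans (mul_le_mul_of_nonneg_right h2 (norm_nonneg v))
    _ = (N₂ * (‖v‖ * ‖v‖)) * s := by ring
  have key : ∀ x ∈ Icc (0:ℝ) 1, ‖g x‖ ≤ (N₂ * (‖v‖ * ‖v‖)) / 2 * x ^ 2 := by
    refine image_norm_le_of_norm_deriv_right_le_deriv_boundary
      (B' := fun x => (N₂ * (‖v‖ * ‖v‖)) * x)
      (fun s _ => (hder s).continuousAt.continuousWithinAt)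
      (fun s _ => (hder s).hasDerivWithinAt) (by simp [hg]) (fun x => ?_) hbound
    have : HasDerivAt (fun x : ℝ => (N₂ * (‖v‖ * ‖v‖)) / 2 * x ^ 2)
        ((N₂ * (‖v‖ * ‖v‖)) / 2 * (2 * x ^ 1)) x := (hasDerivAt_pow 2 x).const_mul _
    convert this using 1
    ring
  have h1 := key 1 (by norm_num)
  have : g 1 = F y - F' h v - F h := by simp [hg, hv]
  rw [this] at h1
  calc ‖F y - F h - F' h (y - h)‖ = ‖F y - F' h v - F h‖ := by rw [hv]; congr 1; abel
  _ ≤ (N₂ * (‖v‖ * ‖v‖)) / 2 * 1 ^ 2 := h1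
  _ = N₂ / 2 * (‖y - h‖ * ‖y - h‖) := by rw [hv]; ring

end gnAuxHelpers

set_option maxHeartbeats 1600000 in
/-- **Key estimate for the regularized continuous Gauss–Newton-type method with spectral
projections (Lemma 4.1).**
Let `F : H → H` be compact and twice Fréchet differentiable with `‖F′‖ ≤ N₁`, `‖F″‖ ≤ N₂`,
and let `y` be the unique solution of `F z = 0`.  Let `T(h) := F′*(h)F′(h)`,
`T_ε(h) := T(h) + εI`, and `P_ε(ξ)` the spectral projection of `T(ξ)` for `[ε, N₁²]`.
Assume `C := sup_{ε ∈ (0,ε₀]} ‖P_ε(ξ) T_ε⁻¹(ξ)(T(y) − T(ξ))‖ < 1/2` and `0 < ε t ≤ ε₀`.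
Then with `Φ(h,t) := (P_{ε t}(ξ) − I)(h − z₀) − P_{ε t}(ξ) T_{ε t}⁻¹(h) F′*(h) F(h)` one has
`⟪Φ(h,t), h − y⟫ ≤ α t ‖h − y‖ − γ ‖h − y‖² + σ t ‖h − y‖³`, where `γ := 1/2 − C > 0`,
`σ t := N₁N₂/ε t + N₂/(4√(ε t))` and `α t := ‖(P_{ε t}(ξ) − I)(y − z₀)‖`. -/

theorem gauss_newton_spectral_key_estimate
    {H : Type*} [NormedAddCommGroup H] [InnerProductSpace ℝ H] [CompleteSpace H]
    (F : H → H) (F' : H → H →L[ℝ] H) (F'' : H → H →L[ℝ] H →L[ℝ] H) (N₁ N₂ : ℝ)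
    (hFcomp : ∀ s : Set H, Bornology.IsBounded s → IsCompact (closure (F '' s)))
    (hF' : ∀ x : H, HasFDerivAt F (F' x) x)
    (hF'' : ∀ x : H, HasFDerivAt F' (F'' x) x)
    (hN₁ : ∀ x : H, ‖F' x‖ ≤ N₁)
    (hN₂ : ∀ x : H, ‖F'' x‖ ≤ N₂)
    (y : H) (hy : F y = 0) (hy_uniq : ∀ y' : H, F y' = 0 → y' = y)
    (ξ : H) (ε₀ : ℝ) (hε₀ : 0 < ε₀) (C : ℝ)
    (hC : IsLUB {c : ℝ | ∃ e ∈ Ioc (0 : ℝ) ε₀, c =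
      ‖specProj (gaussNewtonT F' ξ) e ∘L
        Ring.inverse (gaussNewtonT F' ξ + e • (1 : H →L[ℝ] H)) ∘L
        (gaussNewtonT F' y - gaussNewtonT F' ξ)‖} C)
    (hC2 : C < 1 / 2)
    (ε : ℝ → ℝ) (hε : ∀ t ∈ Ici (0 : ℝ), ε t ∈ Ioc (0 : ℝ) ε₀)
    (z₀ : H) :
    ∀ h : H, ∀ t ∈ Ici (0 : ℝ),
      ⟪(specProj (gaussNewtonT F' ξ) (ε t) - 1) (h - z₀) -
          (specProj (gaussNewtonT F' ξ) (ε t) ∘L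
            Ring.inverse (gaussNewtonT F' h + ε t • (1 : H →L[ℝ] H)))
            (ContinuousLinearMap.adjoint (F' h) (F h)), h - y⟫ ≤
        ‖(specProj (gaussNewtonT F' ξ) (ε t) - 1) (y - z₀)‖ * ‖h - y‖ -
          (1 / 2 - C) * ‖h - y‖ ^ 2 +
          (N₁ * N₂ / ε t + N₂ / (4 * Real.sqrt (ε t))) * ‖h - y‖ ^ 3 := by

  intro h t ht
  have heps := hε t ht
  set e := ε t with he_def
  have he : 0 < e := heps.1
  have heε₀ : e ≤ ε₀ := heps.2
  set u := h - y with hu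
  set a := ‖u‖ with ha
  have ha0 : 0 ≤ a := norm_nonneg u
  set A := F' h with hA
  set Th := gaussNewtonT F' h with hTh
  set Tξ := gaussNewtonT F' ξ with hTξ
  set Ty := gaussNewtonT F' y with hTy
  set P := specProj Tξ e with hP
  have hsymT : ∀ g : H, ∀ x z : H, ⟪gaussNewtonT F' g x, z⟫ = ⟪x, gaussNewtonT F' g z⟫ := by
    intro g x z
    simp only [gaussNewtonT, ContinuousLinearMap.comp_apply,
      ContinuousLinearMap.adjoint_inner_left, ContinuousLinearMap.adjoint_inner_right]
  have hposT : ∀ g : H, ∀ x : H, 0 ≤ ⟪gaussNewtonT F' g x, x⟫ := by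
    intro g x
    simp only [gaussNewtonT, ContinuousLinearMap.comp_apply,
      ContinuousLinearMap.adjoint_inner_left]
    exact real_inner_self_nonneg
  obtain ⟨Qh, h1h, h2h⟩ := gnAux_exists_inv (hposT h) he
  obtain ⟨Qξ, h1ξ, h2ξ⟩ := gnAux_exists_inv (hposT ξ) he
  have hQh_eq : Ring.inverse (Th + e • (1 : H →L[ℝ] H)) = Qh := gnAux_ringInverse_eq h1h h2h
  have hQξ_eq : Ring.inverse (Tξ + e • (1 : H →L[ℝ] H)) = Qξ := gnAux_ringInverse_eq h1ξ h2ξ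
  have hN₁0 : 0 ≤ N₁ := (norm_nonneg (F' h)).trans (hN₁ h)
  have hN₂0 : 0 ≤ N₂ := (norm_nonneg (F'' h)).trans (hN₂ h)
  have hLip : ∀ x x' : H, ‖F' x - F' x'‖ ≤ N₂ * ‖x - x'‖ := fun x x' =>
    Convex.norm_image_sub_le_of_norm_hasFDerivWithin_le
      (fun z _ => (hF'' z).hasFDerivWithinAt) (fun z _ => hN₂ z) convex_univ
      (mem_univ x') (mem_univ x)
  have hadjnorm : ∀ X : H →L[ℝ] H, ‖ContinuousLinearMap.adjoint X‖ = ‖X‖ := fun X =>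
    LinearIsometryEquiv.norm_map ContinuousLinearMap.adjoint X
  have hTdiff : ‖Ty - Th‖ ≤ 2 * (N₁ * N₂) * a := by
    have hdec : Ty - Th = (ContinuousLinearMap.adjoint (F' y)) ∘L (F' y - F' h)
        + (ContinuousLinearMap.adjoint (F' y - F' h)) ∘L (F' h) := by
      rw [hTy, hTh]
      simp only [gaussNewtonT, map_sub, ContinuousLinearMap.comp_sub,
        ContinuousLinearMap.sub_comp]
      abel
    have hFd : ‖F' y - F' h‖ ≤ N₂ * a := by
      have := hLip y h
      rwa [norm_sub_rev y h, ← hu, ← ha] at this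
    calc ‖Ty - Th‖ ≤ ‖(ContinuousLinearMap.adjoint (F' y)) ∘L (F' y - F' h)‖
        + ‖(ContinuousLinearMap.adjoint (F' y - F' h)) ∘L (F' h)‖ := by
          rw [hdec]; exact norm_add_le _ _
    _ ≤ ‖ContinuousLinearMap.adjoint (F' y)‖ * ‖F' y - F' h‖
        + ‖ContinuousLinearMap.adjoint (F' y - F' h)‖ * ‖F' h‖ :=
          add_le_add (ContinuousLinearMap.opNorm_comp_le _ _)
            (ContinuousLinearMap.opNorm_comp_le _ _)
    _ ≤ N₁ * (N₂ * a) + (N₂ * a) * N₁ := by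
          rw [hadjnorm, hadjnorm]
          exact add_le_add
            (mul_le_mul (hN₁ y) hFd (norm_nonneg _) hN₁0)
            (mul_le_mul hFd (hN₁ h) (norm_nonneg _) (by positivity))
    _ = 2 * (N₁ * N₂) * a := by ring
  set R := F h - A u with hR
  have hRle : ‖R‖ ≤ N₂ / 2 * (a * a) := by
    have ht' := gnAux_taylor hF' hLip h y
    rw [hy] at ht'
    have heq : (0:H) - F h - (F' h) (y - h) = -R := by
      rw [hR, hu, hA, map_sub, map_sub]
      abel
    rw [heq, norm_neg, norm_sub_rev y h] at ht'
    simpa [← hu, ← ha] using ht'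
  set Dop := P ∘L Qξ ∘L (Ty - Tξ) with hDop
  have hDopC : ‖Dop‖ ≤ C := by
    refine hC.1 ⟨e, ⟨he, heε₀⟩, ?_⟩
    rw [hQξ_eq]
  have hC0 : 0 ≤ C := le_trans (norm_nonneg Dop) hDopC
  set w := Qh u with hw
  have hwle : ‖w‖ ≤ a / e := gnAux_inv_norm (hposT h) he h2h u
  have hres : Qh u = Qξ u + Qξ ((Tξ - Th) w) := by
    have a1 : Qξ ((Tξ + e • (1 : H →L[ℝ] H)) w) = w := by
      have := congrArg (fun (B : H →L[ℝ] H) => B w) h1ξ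
      simpa using this
    have a2 : (Th + e • (1 : H →L[ℝ] H)) w = u := by
      have := congrArg (fun (B : H →L[ℝ] H) => B u) h2h
      simpa [hw] using this
    have a3 : Qξ ((Tξ + e • (1 : H →L[ℝ] H)) w) - Qξ ((Th + e • (1 : H →L[ℝ] H)) w)
        = Qξ ((Tξ - Th) w) := by
      rw [← map_sub]
      congr 1
      simp only [ContinuousLinearMap.add_apply, ContinuousLinearMap.sub_apply,
        ContinuousLinearMap.smul_apply, ContinuousLinearMap.one_apply]
      abel
    rw [a1, a2] at a3
    have := sub_eq_iff_eq_add'.mp a3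
    rw [hw] at this ⊢
    exact this
  have hTxTh : (Tξ - Th) w = -((Ty - Tξ) w) + (Ty - Th) w := by
    simp only [ContinuousLinearMap.sub_apply]
    abel
  have hDw : Dop w = P (Qξ ((Ty - Tξ) w)) := rfl
  have hPdecomp : P (Qh u) = P (Qξ u) - Dop w + P (Qξ ((Ty - Th) w)) := by
    rw [hres, hTxTh, hDw]
    simp only [map_add, map_neg]
    abel
  have hnb : ‖P (Qh u)‖ ≤ a/(2*e) + C*(a/e) + (2*(N₁*N₂)*a)*(a/e)/(2*e) := by
    rw [hPdecomp]
    have b1 : ‖P (Qξ u)‖ ≤ a/(2*e) := gnAux_specProj_inv_norm (hsymT ξ) he h1ξ h2ξ u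
    have b2 : ‖Dop w‖ ≤ C * (a/e) :=
      le_trans (Dop.le_opNorm w) (mul_le_mul hDopC hwle (norm_nonneg w) hC0)
    have b3 : ‖P (Qξ ((Ty - Th) w))‖ ≤ (2*(N₁*N₂)*a)*(a/e)/(2*e) := by
      have c1 := gnAux_specProj_inv_norm (hsymT ξ) he h1ξ h2ξ ((Ty - Th) w)
      have c2 : ‖(Ty - Th) w‖ ≤ (2*(N₁*N₂)*a)*(a/e) :=
        le_trans ((Ty - Th).le_opNorm w)
          (mul_le_mul hTdiff hwle (norm_nonneg w) (by positivity))
      refine c1.trans ?_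
      gcongr
    calc ‖P (Qξ u) - Dop w + P (Qξ ((Ty - Th) w))‖
        ≤ ‖P (Qξ u) - Dop w‖ + ‖P (Qξ ((Ty - Th) w))‖ := norm_add_le _ _
    _ ≤ (‖P (Qξ u)‖ + ‖Dop w‖) + ‖P (Qξ ((Ty - Th) w))‖ :=
        add_le_add_left (norm_sub_le _ _) _
    _ ≤ a/(2*e) + C*(a/e) + (2*(N₁*N₂)*a)*(a/e)/(2*e) :=
        add_le_add (add_le_add b1 b2) b3
  have hsplit1 : (P - 1) (h - z₀) = (P - 1) u + (P - 1) (y - z₀) := by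
    rw [← map_add]
    congr 1
    rw [hu]; abel
  have hAF : ContinuousLinearMap.adjoint A (F h) = Th u + ContinuousLinearMap.adjoint A R := by
    have hFh : F h = A u + R := by rw [hR]; abel
    rw [hFh, map_add]
    rfl
  have hQhTh : Qh (Th u) = u - e • Qh u := by
    have h' := congrArg (fun (B : H →L[ℝ] H) => B u) h1h
    simp only [ContinuousLinearMap.comp_apply, ContinuousLinearMap.add_apply,
      ContinuousLinearMap.smul_apply, ContinuousLinearMap.one_apply,
      ContinuousLinearMap.one_apply, map_add, map_smul] at h'
    rw [eq_sub_iff_add_eq]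
    exact h'
  have hLHSeq : ⟪(P - 1) (h - z₀)
        - (P ∘L Ring.inverse (Th + e • (1 : H →L[ℝ] H)))
          (ContinuousLinearMap.adjoint A (F h)), u⟫
      = ⟪(P - 1) (y - z₀), u⟫ + (⟪(P - 1) u, u⟫ - ⟪P u, u⟫) + e * ⟪P (Qh u), u⟫
        - ⟪P (Qh (ContinuousLinearMap.adjoint A R)), u⟫ := by
    rw [hQh_eq]
    have hPQ : (P ∘L Qh) (ContinuousLinearMap.adjoint A (F h))
        = P u - e • P (Qh u) + P (Qh (ContinuousLinearMap.adjoint A R)) := by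
      rw [ContinuousLinearMap.comp_apply, hAF, map_add, hQhTh]
      simp only [map_add, map_sub, map_smul]
    rw [hsplit1, hPQ]
    simp only [inner_sub_left, inner_add_left, real_inner_smul_left]
    ring
  have i1 : ⟪(P - 1) (y - z₀), u⟫ ≤ ‖(P - 1) (y - z₀)‖ * a := real_inner_le_norm _ _
  have i2 : ⟪(P - 1) u, u⟫ - ⟪P u, u⟫ = -(a * a) := by
    simp only [ContinuousLinearMap.sub_apply, ContinuousLinearMap.one_apply, inner_sub_left]
    rw [real_inner_self_eq_norm_mul_norm, ← ha]
    ring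
  have i3 : e * ⟪P (Qh u), u⟫
      ≤ e * ((a/(2*e) + C*(a/e) + (2*(N₁*N₂)*a)*(a/e)/(2*e)) * a) :=
    mul_le_mul_of_nonneg_left
      (le_trans (real_inner_le_norm _ _) (mul_le_mul_of_nonneg_right hnb ha0)) he.le
  have hs : 0 < Real.sqrt e := Real.sqrt_pos.mpr he
  have i4 : -⟪P (Qh (ContinuousLinearMap.adjoint A R)), u⟫
      ≤ (N₂/2*(a*a))/(2*Real.sqrt e) * a := by
    have n1 : ‖P (Qh (ContinuousLinearMap.adjoint A R))‖
        ≤ ‖Qh (ContinuousLinearMap.adjoint A R)‖ := gnAux_specProj_norm_le _ _ _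
    have n2 : ‖Qh (ContinuousLinearMap.adjoint A R)‖ ≤ ‖R‖ / (2*Real.sqrt e) :=
      gnAux_inv_adjoint_norm he h2h R
    have n3 : ‖R‖/(2*Real.sqrt e) ≤ (N₂/2*(a*a))/(2*Real.sqrt e) := by gcongr
    have n4 : -⟪P (Qh (ContinuousLinearMap.adjoint A R)), u⟫
        ≤ ‖P (Qh (ContinuousLinearMap.adjoint A R))‖ * a := by
      calc -⟪P (Qh (ContinuousLinearMap.adjoint A R)), u⟫
          ≤ |⟪P (Qh (ContinuousLinearMap.adjoint A R)), u⟫| := neg_le_abs _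
      _ ≤ ‖P (Qh (ContinuousLinearMap.adjoint A R))‖ * ‖u‖ :=
            abs_real_inner_le_norm _ _
      _ = ‖P (Qh (ContinuousLinearMap.adjoint A R))‖ * a := by rw [← ha]
    exact n4.trans (mul_le_mul_of_nonneg_right (n1.trans (n2.trans n3)) ha0)
  have final : ‖(P - 1) (y - z₀)‖ * a + (-(a*a))
        + e * ((a/(2*e) + C*(a/e) + (2*(N₁*N₂)*a)*(a/e)/(2*e)) * a)
        + (N₂/2*(a*a))/(2*Real.sqrt e) * a
      = ‖(P - 1) (y - z₀)‖ * a - (1/2 - C) * a^2 + (N₁*N₂/e + N₂/(4*Real.sqrt e)) * a^3 := by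
    field_simp
    ring
  rw [hLHSeq]
  linarith [i1, i2, i3, i4, final]
end

section
/- Let u ∈ C¹[0,∞) with u(t) ≥ 0 for t > 0 satisfy u̇(t) ≤ −a(t)f(u(t)) + b(t) for t > 0. Assume: (1) a, b ∈ C[0,∞), a(t) > 0 and b(t) ≥ 0 for t > 0; (2) ∫^{+∞} a(t) dt = +∞ and b(t)/a(t) → 0 as t → +∞; (3) f ∈ C[0,∞), f(0) = 0, f(u) > 0 for u > 0; (4) there exists c > 0 such that f(u) ≥ c for all u ≥ 1. Then u(t) → 0 as t → +∞. -/
open Set Filter MeasureTheory intervalIntegral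

/-- FTC helper: the primitive of a function continuous on `[0,∞)` has derivative at `t > 0`. -/
lemma ftc_aux (g : ℝ → ℝ) (hg : ContinuousOn g (Ici 0)) {t : ℝ} (ht : 0 < t) :
    HasDerivAt (fun x => ∫ s in (0:ℝ)..x, g s) (g t) t := by
  refine intervalIntegral.integral_hasDerivAt_right
    ((hg.mono ?_).intervalIntegrable)
    (ContinuousOn.stronglyMeasurableAtFilter isOpen_Ioi
      (hg.mono Ioi_subset_Ici_self) t ht)
    (hg.continuousAt (Ici_mem_nhds ht))
  rw [Set.uIcc_of_le ht.le]
  exact Icc_subset_Ici_self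

/-- Barrier lemma: if `u' t ≤ -g t` whenever `t ≥ T` and `u t ≥ ε`, with `g ≥ 0` beyond `T`
and `∫ g = ∞`, then eventually `u ≤ ε`. -/
lemma barrier_aux (u u' g : ℝ → ℝ) (T ε : ℝ) (hT : 0 < T)
    (hu : ∀ t ∈ Ici (0 : ℝ), HasDerivWithinAt u (u' t) (Ici 0) t)
    (hg : ContinuousOn g (Ici 0))
    (hgnn : ∀ t, T ≤ t → 0 ≤ g t)
    (hkey : ∀ t, T ≤ t → ε ≤ u t → u' t ≤ -g t)
    (hdiv : Tendsto (fun t : ℝ => ∫ s in (0:ℝ)..t, g s) atTop atTop) :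
    ∀ᶠ t in atTop, u t ≤ ε := by
  have huc : ContinuousOn u (Ici 0) := fun t ht => (hu t ht).continuousWithinAt
  have hud : ∀ t : ℝ, 0 < t → HasDerivAt u (u' t) t := fun t ht =>
    (hu t ht.le).hasDerivAt (Ici_mem_nhds ht)
  set G : ℝ → ℝ := fun x => ∫ s in (0:ℝ)..x, g s with hGdef
  have hG : ∀ t : ℝ, 0 < t → HasDerivAt G (g t) t := fun t ht => ftc_aux g hg ht
  -- Step (i): there exists t₁ ≥ T with u t₁ ≤ ε
  have step1 : ∃ t₁, T ≤ t₁ ∧ u t₁ ≤ ε := by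
    by_contra h
    push_neg at h
    have hanti : AntitoneOn (fun t => u t + G t) (Ici T) := by
      refine antitoneOn_of_hasDerivWithinAt_nonpos (convex_Ici T)
        (fun t ht => ?_) (f' := fun t => u' t + g t) (fun x hx => ?_) (fun x hx => ?_)
      · have ht0 : (0:ℝ) < t := lt_of_lt_of_le hT ht
        exact ((hud t ht0).continuousAt.continuousWithinAt).add
          ((hG t ht0).continuousAt.continuousWithinAt)
      · rw [interior_Ici] at hx
        have hx0 : (0:ℝ) < x := lt_trans hT hx
        exact ((hud x hx0).add (hG x hx0)).hasDerivWithinAt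
      · rw [interior_Ici] at hx
        have := hkey x hx.le (h x hx.le).le
        show u' x + g x ≤ 0
        linarith
    obtain ⟨t, ht1, ht2⟩ := ((hdiv.eventually_gt_atTop (u T + G T - ε)).and
      (eventually_ge_atTop T)).exists
    have h1 : u t + G t ≤ u T + G T := hanti (self_mem_Ici) ht2 ht2
    have h2 : ε < u t := h t ht2
    simp only [hGdef] at ht1
    linarith
  obtain ⟨t₁, ht₁T, ht₁⟩ := step1
  -- Step (ii): for all t ≥ t₁, u t ≤ ε
  refine eventually_atTop.2 ⟨t₁, fun t ht => ?_⟩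
  by_contra hlt
  push_neg at hlt
  have ht₁t : t₁ < t := lt_of_le_of_ne ht (by rintro rfl; linarith)
  set S : Set ℝ := Icc t₁ t ∩ u ⁻¹' (Iic ε) with hSdef
  have ht₁pos : (0:ℝ) < t₁ := lt_of_lt_of_le hT ht₁T
  have hIccsub : Icc t₁ t ⊆ Ici (0:ℝ) := fun r hr => le_trans ht₁pos.le hr.1
  have hSclosed : IsClosed S :=
    (huc.mono hIccsub).preimage_isClosed_of_isClosed isClosed_Icc isClosed_Iic
  have hSne : S.Nonempty := ⟨t₁, ⟨le_refl _, ht₁t.le⟩, ht₁⟩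
  have hSbdd : BddAbove S := ⟨t, fun r hr => hr.1.2⟩
  have hsdef : sSup S = sSup S := rfl
  let s0 := sSup S
  have hsmem : s0 ∈ S := hSclosed.csSup_mem hSne hSbdd
  have hst : s0 < t := lt_of_le_of_ne hsmem.1.2 (by
    intro h
    have h2 : u s0 ≤ ε := hsmem.2
    rw [h] at h2
    linarith)
  have hs1 : t₁ ≤ s0 := hsmem.1.1
  have hgt : ∀ r, s0 < r → r ≤ t → ε < u r := by
    intro r hsr hrt
    by_contra hre
    push_neg at hre
    have : r ∈ S := ⟨⟨le_trans hs1 hsr.le, hrt⟩, hre⟩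
    exact absurd (le_csSup hSbdd this) (not_le.2 hsr)
  have hanti : AntitoneOn u (Icc s0 t) := by
    refine antitoneOn_of_hasDerivWithinAt_nonpos (convex_Icc s0 t)
      (huc.mono (fun r hr => le_trans (le_trans ht₁pos.le hs1) hr.1))
      (f' := u') (fun x hx => ?_) (fun x hx => ?_)
    · rw [interior_Icc] at hx
      exact (hud x (lt_trans (lt_of_lt_of_le ht₁pos hs1) hx.1)).hasDerivWithinAt
    · rw [interior_Icc] at hx
      have hxT : T ≤ x := le_trans (le_trans ht₁T hs1) hx.1.le
      have := hkey x hxT (hgt x hx.1 hx.2.le).le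
      have := hgnn x hxT
      linarith
  have : u t ≤ u s0 := hanti ⟨le_refl _, hst.le⟩ ⟨hst.le, le_refl _⟩ hst.le
  have := hsmem.2
  simp only [mem_preimage, mem_Iic] at this
  linarith

/-- **Decay lemma for a nonlinear differential inequality (Lemma 6.1 / Appendix).**
Let `u ∈ C¹[0,∞)`, `u ≥ 0` on `(0,∞)`, satisfy `u̇ t ≤ −a t · f (u t) + b t` for `t > 0`.
Assume: (1) `a, b` continuous on `[0,∞)`, `a > 0`, `b ≥ 0` on `(0,∞)`;
(2) `∫^∞ a = ∞` and `b/a → 0` at `∞`; (3) `f` continuous on `[0,∞)`, `f 0 = 0`, `f > 0` on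
`(0,∞)`; (4) there is `c > 0` with `f u ≥ c` for `u ≥ 1`.  Then `u t → 0` as `t → ∞`. -/
theorem decay_of_nonlinear_differential_inequality
    (u u' a b f : ℝ → ℝ)
    (hu : ∀ t ∈ Ici (0 : ℝ), HasDerivWithinAt u (u' t) (Ici 0) t)
    (hu'c : ContinuousOn u' (Ici 0))
    (hunn : ∀ t : ℝ, 0 < t → 0 ≤ u t)
    (hineq : ∀ t : ℝ, 0 < t → u' t ≤ -a t * f (u t) + b t)
    (hac : ContinuousOn a (Ici 0)) (hbc : ContinuousOn b (Ici 0))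
    (hapos : ∀ t : ℝ, 0 < t → 0 < a t) (hbnn : ∀ t : ℝ, 0 < t → 0 ≤ b t)
    (hadiv : Tendsto (fun t : ℝ => ∫ s in (0 : ℝ)..t, a s) atTop atTop)
    (hba : Tendsto (fun t : ℝ => b t / a t) atTop (nhds 0))
    (hfc : ContinuousOn f (Ici 0)) (hf0 : f 0 = 0)
    (hfpos : ∀ w : ℝ, 0 < w → 0 < f w)
    (hflb : ∃ c : ℝ, 0 < c ∧ ∀ w : ℝ, 1 ≤ w → c ≤ f w) :
    Tendsto u atTop (nhds 0) := by
  obtain ⟨c, hc, hfc1⟩ := hflb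
  -- Step A : eventually u ≤ 1
  have hbae : ∀ δ : ℝ, 0 < δ → ∃ T : ℝ, 0 < T ∧ ∀ t, T ≤ t → b t ≤ δ * a t := by
    intro δ hδ
    obtain ⟨T₀, hT₀⟩ := eventually_atTop.1 (hba.eventually (gt_mem_nhds hδ))
    refine ⟨max T₀ 1, lt_of_lt_of_le one_pos (le_max_right _ _), fun t ht => ?_⟩
    have htpos : (0:ℝ) < t := lt_of_lt_of_le (lt_of_lt_of_le one_pos (le_max_right _ _)) ht
    have h1 : b t / a t < δ := hT₀ t (le_trans (le_max_left _ _) ht)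
    have := (div_lt_iff₀ (hapos t htpos)).1 h1
    linarith
  obtain ⟨Ta, hTa, hTab⟩ := hbae (c / 2) (by linarith)
  have stepA : ∀ᶠ t in atTop, u t ≤ 1 := by
    have key : ∀ t, Ta ≤ t → (1:ℝ) ≤ u t → u' t ≤ -((c/2) * a t) := by
      intro t htT hut
      have htpos : (0:ℝ) < t := lt_of_lt_of_le hTa htT
      have h1 := hineq t htpos
      have h2 := hTab t htT
      have h3 := hfc1 (u t) hut
      have h4 : a t * c ≤ a t * f (u t) :=
        mul_le_mul_of_nonneg_left h3 (hapos t htpos).le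
      nlinarith
    refine barrier_aux u u' (fun t => (c/2) * a t) Ta 1 hTa hu
      (continuousOn_const.mul hac)
      (fun t htT => mul_nonneg (by linarith) (hapos t (lt_of_lt_of_le hTa htT)).le)
      key ?_
    have : (fun t : ℝ => ∫ s in (0:ℝ)..t, (c/2) * a s)
        = fun t : ℝ => (c/2) * ∫ s in (0:ℝ)..t, a s := by
      funext t
      exact intervalIntegral.integral_const_mul (c/2) a
    rw [this]
    exact hadiv.const_mul_atTop (by linarith)
  obtain ⟨TA, hTA⟩ := eventually_atTop.1 stepA
  -- Main step
  rw [Metric.tendsto_atTop]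
  intro ε hε
  set ε' : ℝ := min (ε / 2) 1 with hε'def
  have hε'pos : 0 < ε' := lt_min (by linarith) one_pos
  have hε'le1 : ε' ≤ 1 := min_le_right _ _
  have hε'ltε : ε' < ε := lt_of_le_of_lt (min_le_left _ _) (by linarith)
  -- minimum of f on [ε', 1]
  obtain ⟨w, hw, hwmin⟩ := isCompact_Icc.exists_isMinOn (nonempty_Icc.2 hε'le1)
    (hfc.mono (fun r hr => le_trans hε'pos.le hr.1))
  set m : ℝ := f w with hmdef
  have hm : 0 < m := hfpos w (lt_of_lt_of_le hε'pos hw.1)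
  obtain ⟨Tb, hTb, hTbb⟩ := hbae (m / 2) (by linarith)
  set T₂ : ℝ := max (max Tb TA) 1 with hT₂def
  have hT₂pos : (0:ℝ) < T₂ := lt_of_lt_of_le one_pos (le_max_right _ _)
  have hT₂Tb : Tb ≤ T₂ := le_trans (le_max_left _ _) (le_max_left _ _)
  have hT₂TA : TA ≤ T₂ := le_trans (le_max_right _ _) (le_max_left _ _)
  have key : ∀ t, T₂ ≤ t → ε' ≤ u t → u' t ≤ -((m/2) * a t) := by
    intro t htT hut
    have htpos : (0:ℝ) < t := lt_of_lt_of_le hT₂pos htT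
    have hu1 : u t ≤ 1 := hTA t (le_trans hT₂TA htT)
    have hfm : m ≤ f (u t) := hwmin ⟨hut, hu1⟩
    have h1 := hineq t htpos
    have h2 := hTbb t (le_trans hT₂Tb htT)
    have h4 : a t * m ≤ a t * f (u t) :=
      mul_le_mul_of_nonneg_left hfm (hapos t htpos).le
    nlinarith
  have main : ∀ᶠ t in atTop, u t ≤ ε' := by
    refine barrier_aux u u' (fun t => (m/2) * a t) T₂ ε' hT₂pos hu
      (continuousOn_const.mul hac)
      (fun t htT => mul_nonneg (by linarith) (hapos t (lt_of_lt_of_le hT₂pos htT)).le)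
      key ?_
    have : (fun t : ℝ => ∫ s in (0:ℝ)..t, (m/2) * a s)
        = fun t : ℝ => (m/2) * ∫ s in (0:ℝ)..t, a s := by
      funext t
      exact intervalIntegral.integral_const_mul (m/2) a
    rw [this]
    exact hadiv.const_mul_atTop (by linarith)
  obtain ⟨N, hN⟩ := eventually_atTop.1 main
  refine ⟨max N 1, fun t ht => ?_⟩
  have htpos : (0:ℝ) < t := lt_of_lt_of_le one_pos (le_trans (le_max_right _ _) ht)
  have h1 : u t ≤ ε' := hN t (le_trans (le_max_left _ _) ht)
  have h2 : 0 ≤ u t := hunn t htpos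
  rw [Real.dist_eq, sub_zero, abs_of_nonneg h2]
  linarith
end

section
/- Define f : [0,∞) → ℝ by f(u) = u for 0 ≤ u ≤ 1 and f(u) = e^{1−u} for u ≥ 1; let a(t) ≡ 1 and b(t) = 3/(t+c) with a constant c > e^{-1}. Then the function u(t) = 1 + log(t + c) satisfies u(t) > 0 for all t ≥ 0, u̇(t) ≤ −a(t)f(u(t)) + b(t) for all t > 0, and u(t) → +∞ as t → +∞. (Moreover a, b, f satisfy: a, b continuous, a > 0, b ≥ 0, ∫^{+∞} a = +∞, b/a → 0, f continuous with f(0) = 0 and f(u) > 0 for u > 0; thus the conclusion u(t) → 0 of the decay lemma fails when the condition ‘f(u) ≥ c > 0 for u ≥ 1’ is omitted.) -/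
open Set Filter MeasureTheory Real

/-!
Since `f w ≤ e^{1-w}` for all `w`, along `u = 1 + log (t + c)` the damping `f (u t)` is at most
`1 / (t + c)`, the same order as the forcing `b t = 3 / (t + c)`, so it cannot stop `u` from
growing like `log t`.
-/

noncomputable def rampExpDecay (w : ℝ) : ℝ := if w ≤ 1 then w else exp (1 - w)

theorem continuous_rampExpDecay : Continuous rampExpDecay :=
  continuous_id.if_le (by fun_prop) continuous_id continuous_const fun w hw => by simp [hw]

theorem rampExpDecay_zero : rampExpDecay 0 = 0 := by simp [rampExpDecay]

theorem rampExpDecay_pos {w : ℝ} (hw : 0 < w) : 0 < rampExpDecay w := by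
  unfold rampExpDecay
  split_ifs
  exacts [hw, exp_pos _]

theorem rampExpDecay_le_exp_one_sub (w : ℝ) : rampExpDecay w ≤ exp (1 - w) := by
  unfold rampExpDecay
  split_ifs with h
  · exact h.trans (one_le_exp (by linarith))
  · rfl

theorem rampExpDecay_one_add_log_le {x : ℝ} (hx : 0 < x) : rampExpDecay (1 + log x) ≤ x⁻¹ :=
  calc rampExpDecay (1 + log x) ≤ exp (1 - (1 + log x)) := rampExpDecay_le_exp_one_sub _
    _ = x⁻¹ := by rw [sub_add_cancel_left, exp_neg, exp_log hx]

theorem inv_le_neg_rampExpDecay_one_add_log_add {x : ℝ} (hx : 0 < x) :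
    x⁻¹ ≤ -rampExpDecay (1 + log x) + 3 / x := by
  have h := rampExpDecay_one_add_log_le hx
  have h3 : 3 / x = 3 * x⁻¹ := div_eq_mul_inv _ _
  linarith [inv_pos.mpr hx]

theorem one_add_log_pos {x : ℝ} (hx : exp (-1) < x) : 0 < 1 + log x := by
  have := (lt_log_iff_exp_lt ((exp_pos _).trans hx)).mpr hx
  linarith

theorem hasDerivAt_one_add_log_add_const {t c : ℝ} (h : 0 < t + c) :
    HasDerivAt (fun s => 1 + log (s + c)) (1 / (t + c)) t :=
  (((hasDerivAt_id t).add_const c).log h.ne').const_add 1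

theorem tendsto_one_add_log_add_const_atTop (c : ℝ) :
    Tendsto (fun t => 1 + log (t + c)) atTop atTop :=
  tendsto_atTop_add_const_left _ 1
    (tendsto_log_atTop.comp (tendsto_atTop_add_const_right _ c tendsto_id))

/-- **Counterexample showing condition 4) of the decay lemma is essential.**
With `f u = u` for `0 ≤ u ≤ 1`, `f u = e^{1−u}` for `u ≥ 1`, `a ≡ 1`, `b t = 3/(t+c)` for a
constant `c > e⁻¹`, the function `u t = 1 + log (t + c)` is positive for all `t ≥ 0`,
satisfies `u̇ t ≤ −a t · f (u t) + b t` for all `t > 0`, and `u t → +∞` as `t → +∞`.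
Moreover `a, b, f` satisfy all the remaining hypotheses of the decay lemma (`a, b` continuous,
`a > 0`, `b ≥ 0`, `∫^∞ a = ∞`, `b/a → 0`, `f` continuous, `f 0 = 0`, `f > 0` on `(0,∞)`),
and the conclusion `u t → 0` fails. -/
theorem counterexample_decay_lemma_without_lower_bound
    (c : ℝ) (hc : Real.exp (-1) < c)
    (f a b u : ℝ → ℝ)
    (hf : f = fun w : ℝ => if w ≤ 1 then w else Real.exp (1 - w))
    (ha : a = fun _ : ℝ => (1 : ℝ))
    (hb : b = fun t : ℝ => 3 / (t + c))
    (hu : u = fun t : ℝ => 1 + Real.log (t + c)) :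
    (∀ t ∈ Ici (0 : ℝ), 0 < u t) ∧
    (∀ t : ℝ, 0 < t → HasDerivAt u (1 / (t + c)) t ∧
      1 / (t + c) ≤ -a t * f (u t) + b t) ∧
    Tendsto u atTop atTop ∧
    ContinuousOn a (Ici 0) ∧
    ContinuousOn b (Ici 0) ∧
    (∀ t : ℝ, 0 < t → 0 < a t) ∧
    (∀ t : ℝ, 0 < t → 0 ≤ b t) ∧
    Tendsto (fun t : ℝ => ∫ s in (0 : ℝ)..t, a s) atTop atTop ∧
    Tendsto (fun t : ℝ => b t / a t) atTop (nhds 0) ∧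
    ContinuousOn f (Ici 0) ∧ f 0 = 0 ∧ (∀ w : ℝ, 0 < w → 0 < f w) ∧
    ¬ Tendsto u atTop (nhds 0) := by
  replace hf : f = rampExpDecay := hf
  subst hf ha hb hu
  have hc0 : 0 < c := (exp_pos _).trans hc
  have hu_atTop := tendsto_one_add_log_add_const_atTop c
  have hb_cont : ContinuousOn (fun t : ℝ => 3 / (t + c)) (Ici 0) :=
    continuousOn_const.div (by fun_prop) fun t (ht : 0 ≤ t) => by positivity
  refine ⟨fun t (ht : 0 ≤ t) => one_add_log_pos (by linarith), fun t ht => ?_, hu_atTop,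
    continuousOn_const, hb_cont, fun _ _ => one_pos, fun t ht => by positivity,
    ?_, ?_, continuous_rampExpDecay.continuousOn, rampExpDecay_zero, fun _ => rampExpDecay_pos,
    not_tendsto_nhds_of_tendsto_atTop hu_atTop 0⟩
  · have htc : 0 < t + c := by linarith
    exact ⟨hasDerivAt_one_add_log_add_const htc,
      by simpa using inv_le_neg_rampExpDecay_one_add_log_add htc⟩
  · simp only [intervalIntegral.integral_const, sub_zero, smul_eq_mul, mul_one]
    exact tendsto_id
  · simpa using tendsto_const_nhds.div_atTop (tendsto_atTop_add_const_right _ c tendsto_id)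
end
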